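/- arXiv:2604.26942 — 10 statements merged into one kernel-verified Lean document; each statement's English description precedes it below -/
import Mathlib

section
/- Let σ̄ : ℝ × ℝ → ℝ be convex and non-decreasing in each coordinate, let the matrices V_ℓ^1, V_ℓ^2 (ℓ = 0, …, L−1) and the output row vector V_L have non-negative entries, and let the skip matrices W_ℓ^1, W_ℓ^2, W_L and biases b_ℓ^1, b_ℓ^2, b_L be arbitrary. Then the gated HyCNN output x ↦ V_L · z_L(x) + W_L · x + b_L is a convex function on ℝ^d. -/
lemma myConvexOn_linear {n : ℕ} (c : Fin n → ℝ) :
    ConvexOn ℝ Set.univ (fun x : Fin n → ℝ => ∑ i, c i * x i) := by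
  refine ⟨convex_univ, fun x _ y _ a b ha hb hab => le_of_eq ?_⟩
  simp only [Pi.add_apply, Pi.smul_apply, smul_eq_mul]
  rw [Finset.mul_sum, Finset.mul_sum, ← Finset.sum_add_distrib]
  exact Finset.sum_congr rfl fun i _ => by ring

lemma myConvexOn_sum {ι n : Type*} [Fintype n] (s : Finset ι) (f : ι → (n → ℝ) → ℝ)
    (h : ∀ i ∈ s, ConvexOn ℝ Set.univ (f i)) :
    ConvexOn ℝ Set.univ (fun x => ∑ i ∈ s, f i x) := by
  classical
  induction s using Finset.induction with
  | empty => simpa using convexOn_const 0 convex_univ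
  | insert _ _ hi ih =>
    simp only [Finset.sum_insert hi]
    exact (h _ (Finset.mem_insert_self _ _)).add
      (ih fun i hmem => h i (Finset.mem_insert_of_mem hmem))

lemma myGate {σbar : ℝ × ℝ → ℝ} (hconv : ConvexOn ℝ Set.univ σbar) (hmono : Monotone σbar)
    {n : Type*} [Fintype n] {f g : (n → ℝ) → ℝ}
    (hf : ConvexOn ℝ Set.univ f) (hg : ConvexOn ℝ Set.univ g) :
    ConvexOn ℝ Set.univ (fun x => σbar (f x, g x)) := by
  refine ⟨convex_univ, fun x _ y _ a b ha hb hab => ?_⟩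
  calc σbar (f (a•x+b•y), g (a•x+b•y))
      ≤ σbar (a • f x + b • f y, a • g x + b • g y) :=
        hmono ⟨hf.2 trivial trivial ha hb hab, hg.2 trivial trivial ha hb hab⟩
    _ = σbar (a • (f x, g x) + b • (f y, g y)) := rfl
    _ ≤ a • σbar (f x, g x) + b • σbar (f y, g y) := hconv.2 trivial trivial ha hb hab


/-- The hidden states of a gated HyCNN on `ℝ^d` with gating activation `σbar`.
Layer widths are `w ℓ` (with `z_0 = 0 ∈ ℝ^{w 0}`), weight matrices `V1 ℓ, V2 ℓ`,
skip matrices `W1 ℓ, W2 ℓ` and biases `b1 ℓ, b2 ℓ`. -/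
noncomputable def gatedHidden (d : ℕ) (σbar : ℝ × ℝ → ℝ) (w : ℕ → ℕ)
    (V1 V2 : (ℓ : ℕ) → Matrix (Fin (w (ℓ + 1))) (Fin (w ℓ)) ℝ)
    (W1 W2 : (ℓ : ℕ) → Matrix (Fin (w (ℓ + 1))) (Fin d) ℝ)
    (b1 b2 : (ℓ : ℕ) → Fin (w (ℓ + 1)) → ℝ) :
    (ℓ : ℕ) → (Fin d → ℝ) → Fin (w ℓ) → ℝ
  | 0, _ => 0
  | ℓ + 1, x => fun i =>
      σbar ((V1 ℓ).mulVec (gatedHidden d σbar w V1 V2 W1 W2 b1 b2 ℓ x) i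
              + (W1 ℓ).mulVec x i + b1 ℓ i,
            (V2 ℓ).mulVec (gatedHidden d σbar w V1 V2 W1 W2 b1 b2 ℓ x) i
              + (W2 ℓ).mulVec x i + b2 ℓ i)

/-- If the gating activation `σbar` is convex and componentwise
non-decreasing and all hidden-to-hidden weight matrices `V1 ℓ, V2 ℓ` (ℓ < L) as well as the
output row vector `VL` have non-negative entries, then the gated HyCNN output
`x ↦ VL ⬝ z_L(x) + WL ⬝ x + bL` is a convex function on `ℝ^d`. -/
theorem gatedHyCNN_convex (d L : ℕ) (σbar : ℝ × ℝ → ℝ)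
    (hσ_conv : ConvexOn ℝ Set.univ σbar)
    (hσ_mono : Monotone σbar)
    (w : ℕ → ℕ)
    (V1 V2 : (ℓ : ℕ) → Matrix (Fin (w (ℓ + 1))) (Fin (w ℓ)) ℝ)
    (W1 W2 : (ℓ : ℕ) → Matrix (Fin (w (ℓ + 1))) (Fin d) ℝ)
    (b1 b2 : (ℓ : ℕ) → Fin (w (ℓ + 1)) → ℝ)
    (hV1 : ∀ ℓ, ℓ < L → ∀ i j, 0 ≤ V1 ℓ i j)
    (hV2 : ∀ ℓ, ℓ < L → ∀ i j, 0 ≤ V2 ℓ i j)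
    (VL : Fin (w L) → ℝ) (hVL : ∀ i, 0 ≤ VL i)
    (WL : Fin d → ℝ) (bL : ℝ) :
    ConvexOn ℝ Set.univ (fun x : Fin d → ℝ =>
      (∑ i, VL i * gatedHidden d σbar w V1 V2 W1 W2 b1 b2 L x i)
        + (∑ i, WL i * x i) + bL) := by
  have key : ∀ ℓ, ℓ ≤ L → ∀ i, ConvexOn ℝ Set.univ
      (fun x => gatedHidden d σbar w V1 V2 W1 W2 b1 b2 ℓ x i) := by
    intro ℓ
    induction ℓ with
    | zero =>
      intro _ i
      simpa [gatedHidden] using convexOn_const (0 : ℝ) (convex_univ (𝕜 := ℝ) (E := Fin d → ℝ))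
    | succ ℓ ih =>
      intro hℓ i
      have hℓL : ℓ < L := lt_of_lt_of_le (Nat.lt_succ_self ℓ) hℓ
      have ih' := ih (le_of_lt hℓL)
      have harg : ∀ (V : Matrix (Fin (w (ℓ+1))) (Fin (w ℓ)) ℝ) (hV : ∀ i j, 0 ≤ V i j)
          (W : Matrix (Fin (w (ℓ+1))) (Fin d) ℝ) (c : Fin (w (ℓ+1)) → ℝ),
          ConvexOn ℝ Set.univ (fun x =>
            V.mulVec (gatedHidden d σbar w V1 V2 W1 W2 b1 b2 ℓ x) i + W.mulVec x i + c i) := by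
        intro V hV W c
        have h1 : ConvexOn ℝ Set.univ (fun x =>
            ∑ j, V i j * gatedHidden d σbar w V1 V2 W1 W2 b1 b2 ℓ x j) :=
          myConvexOn_sum Finset.univ _ (fun j _ => ConvexOn.smul (hV i j) (ih' j))
        have h2 := myConvexOn_linear (W i)
        have := (h1.add h2).add (convexOn_const (c i) convex_univ)
        simpa [Matrix.mulVec, dotProduct, Pi.add_def] using this
      show ConvexOn ℝ Set.univ (fun x => σbar (_, _))
      exact myGate hσ_conv hσ_mono
        (harg (V1 ℓ) (hV1 ℓ hℓL) (W1 ℓ) (b1 ℓ))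
        (harg (V2 ℓ) (hV2 ℓ hℓL) (W2 ℓ) (b2 ℓ))
  have h1 : ConvexOn ℝ Set.univ (fun x =>
      ∑ i, VL i * gatedHidden d σbar w V1 V2 W1 W2 b1 b2 L x i) :=
    myConvexOn_sum Finset.univ _ (fun i _ => ConvexOn.smul (hVL i) (key L le_rfl i))
  exact (h1.add (myConvexOn_linear WL)).add (convexOn_const bL convex_univ)
end

section
/- For every positive integer k and every function g in G_k, the class of real-valued, piecewise-affine, convex functions on [0,1] with at most k pieces, one has ∫₀¹ |g(x) − x²| dx ≥ 1/(16 k²). -/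
open MeasureTheory intervalIntegral

lemma affine_integrable (c e a b : ℝ) :
    IntervalIntegrable (fun x => |c * x + e - x ^ 2|) volume a b :=
  (Continuous.abs (by fun_prop)).intervalIntegrable a b

lemma eval_int (c e u v : ℝ) :
    ∫ x in u..v, (c * x + e - x ^ 2) =
      c * (v ^ 2 - u ^ 2) / 2 + e * (v - u) - (v ^ 3 - u ^ 3) / 3 := by
  have h1 : IntervalIntegrable (fun x : ℝ => c * x + e) volume u v :=
    (by fun_prop : Continuous fun x : ℝ => c * x + e).intervalIntegrable u v
  have h2 : IntervalIntegrable (fun x : ℝ => x ^ 2) volume u v :=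
    (by fun_prop : Continuous fun x : ℝ => x ^ 2).intervalIntegrable u v
  have h3 : IntervalIntegrable (fun x : ℝ => c * x) volume u v :=
    (by fun_prop : Continuous fun x : ℝ => c * x).intervalIntegrable u v
  rw [intervalIntegral.integral_sub h1 h2,
    intervalIntegral.integral_add h3 (intervalIntegrable_const),
    intervalIntegral.integral_const_mul, integral_id, integral_pow,
    intervalIntegral.integral_const, smul_eq_mul]
  push_cast
  ring

lemma key (a b c e : ℝ) (hab : a ≤ b) :
    (b - a) ^ 3 / 16 ≤ ∫ x in a..b, |c * x + e - x ^ 2| := by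
  obtain ⟨p, hp⟩ : ∃ p : ℝ, p = a + (b - a) / 4 := ⟨_, rfl⟩
  obtain ⟨q, hq⟩ : ∃ q : ℝ, q = a + 3 * (b - a) / 4 := ⟨_, rfl⟩
  have hap : a ≤ p := by rw [hp]; linarith
  have hpq : p ≤ q := by rw [hp, hq]; linarith
  have hqb : q ≤ b := by rw [hq]; linarith
  have habs : ∀ x : ℝ, -(c * x + e - x ^ 2) ≤ |c * x + e - x ^ 2| := fun x => neg_le_abs _
  have habs' : ∀ x : ℝ, (c * x + e - x ^ 2) ≤ |c * x + e - x ^ 2| := fun x => le_abs_self _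
  have split : (∫ x in a..b, |c * x + e - x ^ 2|) =
      (∫ x in a..p, |c * x + e - x ^ 2|) + (∫ x in p..q, |c * x + e - x ^ 2|)
        + (∫ x in q..b, |c * x + e - x ^ 2|) := by
    rw [add_assoc,
      integral_add_adjacent_intervals (affine_integrable c e p q) (affine_integrable c e q b),
      integral_add_adjacent_intervals (affine_integrable c e a p) (affine_integrable c e p b)]
  have b1 : (∫ x in a..p, -(c * x + e - x ^ 2)) ≤ ∫ x in a..p, |c * x + e - x ^ 2| :=
    intervalIntegral.integral_mono hap
      ((by fun_prop : Continuous fun x : ℝ => -(c * x + e - x ^ 2)).intervalIntegrable a p)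
      (affine_integrable c e a p) (fun x => habs x)
  have b2 : (∫ x in p..q, (c * x + e - x ^ 2)) ≤ ∫ x in p..q, |c * x + e - x ^ 2| :=
    intervalIntegral.integral_mono hpq
      ((by fun_prop : Continuous fun x : ℝ => c * x + e - x ^ 2).intervalIntegrable p q)
      (affine_integrable c e p q) (fun x => habs' x)
  have b3 : (∫ x in q..b, -(c * x + e - x ^ 2)) ≤ ∫ x in q..b, |c * x + e - x ^ 2| :=
    intervalIntegral.integral_mono hqb
      ((by fun_prop : Continuous fun x : ℝ => -(c * x + e - x ^ 2)).intervalIntegrable q b)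
      (affine_integrable c e q b) (fun x => habs x)
  have e1 : (∫ x in a..p, -(c * x + e - x ^ 2)) = -(∫ x in a..p, (c * x + e - x ^ 2)) :=
    intervalIntegral.integral_neg
  have e3 : (∫ x in q..b, -(c * x + e - x ^ 2)) = -(∫ x in q..b, (c * x + e - x ^ 2)) :=
    intervalIntegral.integral_neg
  rw [split]
  rw [e1] at b1; rw [e3] at b3
  rw [eval_int] at b1 b2 b3
  have hid : -(c * (p ^ 2 - a ^ 2) / 2 + e * (p - a) - (p ^ 3 - a ^ 3) / 3)
      + (c * (q ^ 2 - p ^ 2) / 2 + e * (q - p) - (q ^ 3 - p ^ 3) / 3)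
      - (c * (b ^ 2 - q ^ 2) / 2 + e * (b - q) - (b ^ 3 - q ^ 3) / 3) = (b - a) ^ 3 / 16 := by
    rw [hp, hq]; ring
  linarith [b1, b2, b3, hid]


/-- Every convex, piecewise-affine function `g` on `[0,1]` with at most `k`
pieces satisfies `∫₀¹ |g(x) − x²| dx ≥ 1/(16 k²)`.  Membership to the class `G_k` is spelled out:
`g` is convex on `[0,1]` and there are `m ≤ k` pieces `0 = t_0 < t_1 < ⋯ < t_m = 1` on each of
which `g` is affine. -/
theorem piecewise_affine_convex_L1_lower_bound (k : ℕ) (hk : 0 < k) (g : ℝ → ℝ)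
    (hconv : ConvexOn ℝ (Set.Icc (0 : ℝ) 1) g)
    (hpw : ∃ m : ℕ, m ≤ k ∧ ∃ t : Fin (m + 1) → ℝ,
      t 0 = 0 ∧ t (Fin.last m) = 1 ∧ StrictMono t ∧
      ∀ i : Fin m, ∃ c e : ℝ, ∀ x ∈ Set.Icc (t i.castSucc) (t i.succ),
        g x = c * x + e) :
    1 / (16 * (k : ℝ) ^ 2) ≤ ∫ x in (0 : ℝ)..1, |g x - x ^ 2| := by
  obtain ⟨m, hmk, t, ht0, htl, hmono, haff⟩ := hpw
  have hm : 0 < m := by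
    rcases Nat.eq_zero_or_pos m with h | h
    · subst h
      rw [show (Fin.last 0) = 0 from rfl, ht0] at htl
      norm_num at htl
    · exact h
  set a : ℕ → ℝ := fun n => t ⟨min n m, Nat.lt_succ_of_le (min_le_right _ _)⟩ with ha
  have haval : ∀ i : ℕ, (h : i ≤ m) → a i = t ⟨i, Nat.lt_succ_of_le h⟩ := by
    intro i h
    simp only [ha]
    congr 1
    exact Fin.ext (Nat.min_eq_left h)
  have ha0 : a 0 = 0 := by rw [haval 0 (Nat.zero_le m)]; exact ht0
  have ham : a m = 1 := by rw [haval m le_rfl]; exact htl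
  -- piece facts
  have piece : ∀ i : ℕ, (hi : i < m) →
      a i ≤ a (i + 1) ∧
      IntervalIntegrable (fun x => |g x - x ^ 2|) volume (a i) (a (i + 1)) ∧
      (a (i + 1) - a i) ^ 3 / 16 ≤ ∫ x in a i..a (i + 1), |g x - x ^ 2| := by
    intro i hi
    obtain ⟨c, e, hce⟩ := haff ⟨i, hi⟩
    have h1 : a i = t (Fin.castSucc ⟨i, hi⟩) := by
      rw [haval i hi.le]; rfl
    have h2 : a (i + 1) = t (Fin.succ ⟨i, hi⟩) := by
      rw [haval (i + 1) hi]; rfl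
    have hle : a i ≤ a (i + 1) := by
      rw [h1, h2]
      exact (hmono Fin.castSucc_lt_succ).le
    have hEq : ∀ x ∈ Set.uIcc (a i) (a (i + 1)), g x - x ^ 2 = c * x + e - x ^ 2 := by
      intro x hx
      rw [Set.uIcc_of_le hle] at hx
      rw [hce x (by rw [h1, h2] at hx; exact hx)]
    have hInt : IntervalIntegrable (fun x => |g x - x ^ 2|) volume (a i) (a (i + 1)) := by
      apply (affine_integrable c e (a i) (a (i + 1))).congr
      intro x hx
      exact congrArg abs (hEq x (Set.uIoc_subset_uIcc hx)).symm
    have hcongr : (∫ x in a i..a (i + 1), |g x - x ^ 2|)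
        = ∫ x in a i..a (i + 1), |c * x + e - x ^ 2| := by
      apply intervalIntegral.integral_congr
      intro x hx
      exact congrArg abs (hEq x hx)
    refine ⟨hle, hInt, ?_⟩
    rw [hcongr]
    exact key (a i) (a (i + 1)) c e hle
  -- split the integral
  have hsplit : (∑ i ∈ Finset.range m, ∫ x in a i..a (i + 1), |g x - x ^ 2|)
      = ∫ x in (0 : ℝ)..1, |g x - x ^ 2| := by
    rw [intervalIntegral.sum_integral_adjacent_intervals (fun i hi => (piece i hi).2.1),
      ha0, ham]
  -- telescoping sum of lengths
  have hlen : ∑ i ∈ Finset.range m, (a (i + 1) - a i) = 1 := by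
    rw [Finset.sum_range_sub, ha0, ham]; ring
  have hcube : (1 : ℝ) / (m : ℝ) ^ 2 ≤ ∑ i ∈ Finset.range m, (a (i + 1) - a i) ^ 3 := by
    have := pow_sum_div_card_le_sum_pow
      (f := fun i => a (i + 1) - a i) (s := Finset.range m)
      (fun i hi => sub_nonneg.2 (piece i (Finset.mem_range.1 hi)).1) 2
    rw [hlen] at this
    simpa using this
  have hsum : ∑ i ∈ Finset.range m, (a (i + 1) - a i) ^ 3 / 16
      ≤ ∑ i ∈ Finset.range m, ∫ x in a i..a (i + 1), |g x - x ^ 2| :=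
    Finset.sum_le_sum fun i hi => (piece i (Finset.mem_range.1 hi)).2.2
  have hmR : (0 : ℝ) < (m : ℝ) := by exact_mod_cast hm
  have hkR : (0 : ℝ) < (k : ℝ) := by exact_mod_cast hk
  have hmkR : (m : ℝ) ≤ (k : ℝ) := by exact_mod_cast hmk
  have h1 : 1 / (16 * (k : ℝ) ^ 2) ≤ 1 / (16 * (m : ℝ) ^ 2) := by
    apply one_div_le_one_div_of_le (by positivity)
    nlinarith
  calc 1 / (16 * (k : ℝ) ^ 2) ≤ 1 / (16 * (m : ℝ) ^ 2) := h1
    _ ≤ (∑ i ∈ Finset.range m, (a (i + 1) - a i) ^ 3) / 16 := by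
        rw [show 1 / (16 * (m : ℝ) ^ 2) = (1 / (m : ℝ) ^ 2) / 16 by ring]
        linarith
    _ = ∑ i ∈ Finset.range m, (a (i + 1) - a i) ^ 3 / 16 := by
        rw [Finset.sum_div]
    _ ≤ ∑ i ∈ Finset.range m, ∫ x in a i..a (i + 1), |g x - x ^ 2| := hsum
    _ = ∫ x in (0 : ℝ)..1, |g x - x ^ 2| := hsplit
end

section
/- For every positive integer k and every function g in G_k, the class of real-valued, piecewise-affine, convex functions on [0,1] with at most k pieces, one has sup_{x ∈ [0,1]} |g(x) − x²| ≥ 1/(8 k²). -/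
lemma cover_aux (x : ℝ) : ∀ (m : ℕ), 0 < m → ∀ (u : ℕ → ℝ), u 0 ≤ x → x ≤ u m →
    ∃ i < m, u i ≤ x ∧ x ≤ u (i + 1) := by
  intro m
  induction m with
  | zero => omega
  | succ n ih =>
    intro _ u h0 h1
    by_cases hn : n = 0
    · subst hn; exact ⟨0, by omega, h0, h1⟩
    · by_cases hx : x ≤ u n
      · obtain ⟨i, hi, h⟩ := ih (by omega) u h0 hx
        exact ⟨i, by omega, h⟩
      · exact ⟨n, by omega, le_of_not_ge hx, h1⟩

/-- Every convex, piecewise-affine function `g` on `[0,1]` with at most `k`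
pieces satisfies `sup_{x ∈ [0,1]} |g(x) − x²| ≥ 1/(8 k²)`.  Membership to the class `G_k` is
spelled out: `g` is convex on `[0,1]` and there are `m ≤ k` pieces
`0 = t_0 < t_1 < ⋯ < t_m = 1` on each of which `g` is affine. -/
theorem piecewise_affine_convex_sup_lower_bound (k : ℕ) (hk : 0 < k) (g : ℝ → ℝ)
    (hconv : ConvexOn ℝ (Set.Icc (0 : ℝ) 1) g)
    (hpw : ∃ m : ℕ, m ≤ k ∧ ∃ t : Fin (m + 1) → ℝ,
      t 0 = 0 ∧ t (Fin.last m) = 1 ∧ StrictMono t ∧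
      ∀ i : Fin m, ∃ c e : ℝ, ∀ x ∈ Set.Icc (t i.castSucc) (t i.succ),
        g x = c * x + e) :
    1 / (8 * (k : ℝ) ^ 2) ≤ ⨆ x : Set.Icc (0 : ℝ) 1, |g x - (x : ℝ) ^ 2| := by
  clear hconv
  obtain ⟨m, hmk, t, ht0, htl, hmono, haff⟩ := hpw
  have hm : 0 < m := by
    by_contra h
    have hm0 : m = 0 := by omega
    subst hm0
    rw [show (Fin.last 0) = 0 from rfl, ht0] at htl
    norm_num at htl
  choose c e hce using haff
  haveI : Nonempty (Fin m) := ⟨⟨0, hm⟩⟩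
  set u : ℕ → ℝ := fun n => t ⟨min n m, Nat.lt_succ_of_le (min_le_right _ _)⟩ with hu
  have hu0 : u 0 = 0 := by
    simpa [hu, Nat.min_eq_left (Nat.zero_le m)] using ht0
  have hum : u m = 1 := by
    simpa [hu, Fin.last] using htl
  have hmon : Monotone t := hmono.monotone
  -- identify u with t on pieces
  have huc : ∀ j : Fin m, u j.val = t j.castSucc ∧ u (j.val + 1) = t j.succ := by
    intro j
    constructor
    · simp only [hu]
      congr 1
      exact Fin.ext (by simp [Nat.min_eq_left (le_of_lt j.isLt)])
    · simp only [hu]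
      congr 1
      exact Fin.ext (by simp [Nat.min_eq_left j.isLt])
  -- boundedness
  set f : Set.Icc (0 : ℝ) 1 → ℝ := fun x => |g x - (x : ℝ) ^ 2| with hf
  set M : ℝ := Finset.univ.sup' (Finset.univ_nonempty) (fun i : Fin m => |c i| + |e i|) with hM
  have hBdd : BddAbove (Set.range f) := by
    refine ⟨M + 1, ?_⟩
    rintro y ⟨⟨x, hx0, hx1⟩, rfl⟩
    obtain ⟨i, hi, hxl, hxr⟩ := cover_aux x m hm u (by rw [hu0]; exact hx0) (by rw [hum]; exact hx1)
    set j : Fin m := ⟨i, hi⟩ with hj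
    have h1 := (huc j).1
    have h2 := (huc j).2
    have hxmem : x ∈ Set.Icc (t j.castSucc) (t j.succ) := by
      constructor
      · rw [← h1]; exact hxl
      · rw [← h2]; exact hxr
    have hg := hce j x hxmem
    have hcM : |c j| + |e j| ≤ M := Finset.le_sup' (fun i : Fin m => |c i| + |e i|) (Finset.mem_univ j)
    have hxabs : |x| ≤ 1 := abs_le.mpr ⟨by linarith, hx1⟩
    have : |g x - x ^ 2| ≤ |c j| + |e j| + 1 := by
      rw [hg]
      have h3 : |c j * x + e j - x ^ 2| ≤ |c j * x| + |e j| + |x ^ 2| := by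
        calc |c j * x + e j - x ^ 2| ≤ |c j * x + e j| + |x ^ 2| := abs_sub _ _
          _ ≤ |c j * x| + |e j| + |x ^ 2| := by gcongr; exact abs_add_le _ _
      have h4 : |c j * x| ≤ |c j| := by
        rw [abs_mul]
        calc |c j| * |x| ≤ |c j| * 1 := by gcongr
          _ = |c j| := mul_one _
      have h5 : |x ^ 2| = |x| ^ 2 := abs_pow x 2
      nlinarith [abs_nonneg x]
    simp only [hf]
    linarith
  -- pigeonhole: some gap is ≥ 1/k
  have hsum : ∑ i ∈ Finset.range m, (u (i + 1) - u i) = 1 := by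
    rw [Finset.sum_range_sub u, hu0, hum]; ring
  have hgap : ∃ i < m, 1 / (k : ℝ) ≤ u (i + 1) - u i := by
    by_contra h
    push_neg at h
    have : ∑ i ∈ Finset.range m, (u (i + 1) - u i) <
        ∑ _i ∈ Finset.range m, (1 / (k : ℝ)) := by
      apply Finset.sum_lt_sum_of_nonempty
      · exact Finset.nonempty_range_iff.mpr (by omega)
      · intro i hi
        exact h i (Finset.mem_range.mp hi)
    rw [hsum, Finset.sum_const, Finset.card_range, nsmul_eq_mul] at this
    have hkpos : (0 : ℝ) < k := Nat.cast_pos.mpr hk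
    have hmk' : (m : ℝ) ≤ k := Nat.cast_le.mpr hmk
    have hle : (m : ℝ) * (1 / k) ≤ 1 := by
      rw [mul_one_div]
      exact (div_le_one hkpos).mpr hmk'
    linarith
  obtain ⟨i, hi, hgapi⟩ := hgap
  set j : Fin m := ⟨i, hi⟩ with hj
  set a : ℝ := t j.castSucc with ha
  set b : ℝ := t j.succ with hb
  have h1 := (huc j).1
  have h2 := (huc j).2
  have hab : 1 / (k : ℝ) ≤ b - a := by rw [ha, hb, ← h1, ← h2]; exact hgapi
  have hkpos : (0 : ℝ) < k := Nat.cast_pos.mpr hk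
  have haleb : a ≤ b := by
    have : 0 < 1 / (k : ℝ) := by positivity
    linarith
  have ha0 : 0 ≤ a := by rw [ha, ← ht0]; exact hmon (Fin.zero_le _)
  have hb1 : b ≤ 1 := by rw [hb, ← htl]; exact hmon (Fin.le_last _)
  set mid : ℝ := (a + b) / 2 with hmid
  have hamem : a ∈ Set.Icc (t j.castSucc) (t j.succ) := ⟨le_refl _, haleb⟩
  have hbmem : b ∈ Set.Icc (t j.castSucc) (t j.succ) := ⟨haleb, le_refl _⟩
  have hmmem : mid ∈ Set.Icc (t j.castSucc) (t j.succ) :=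
    ⟨by rw [← ha]; rw [hmid]; linarith, by rw [← hb]; rw [hmid]; linarith⟩
  have hga := hce j a hamem
  have hgb := hce j b hbmem
  have hgm := hce j mid hmmem
  have ha01 : a ∈ Set.Icc (0 : ℝ) 1 := ⟨ha0, le_trans haleb hb1⟩
  have hb01 : b ∈ Set.Icc (0 : ℝ) 1 := ⟨le_trans ha0 haleb, hb1⟩
  have hm01 : mid ∈ Set.Icc (0 : ℝ) 1 := ⟨by rw [hmid]; linarith, by rw [hmid]; linarith⟩
  set Ea := |g a - a ^ 2| with hEa
  set Eb := |g b - b ^ 2| with hEb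
  set Em := |g mid - mid ^ 2| with hEm
  set v : ℝ := max Ea (max Eb Em) with hv
  have hkey : (b - a) ^ 2 / 2 ≤ 4 * v := by
    have hsum2 : (g a - a ^ 2) + (g b - b ^ 2) - 2 * (g mid - mid ^ 2) = -((b - a) ^ 2 / 2) := by
      rw [hga, hgb, hgm, hmid]; ring
    have h3 : (b - a) ^ 2 / 2 ≤ Ea + Eb + 2 * Em := by
      have := abs_le.mp (le_refl |(g a - a ^ 2) + (g b - b ^ 2) - 2 * (g mid - mid ^ 2)|)
      have t1 : |g a - a ^ 2 + (g b - b ^ 2) - 2 * (g mid - mid ^ 2)| ≤ Ea + Eb + 2 * Em := by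
        rw [hEa, hEb, hEm]
        calc |g a - a ^ 2 + (g b - b ^ 2) - 2 * (g mid - mid ^ 2)|
            ≤ |g a - a ^ 2 + (g b - b ^ 2)| + |2 * (g mid - mid ^ 2)| := abs_sub _ _
          _ ≤ |g a - a ^ 2| + |g b - b ^ 2| + 2 * |g mid - mid ^ 2| := by
              rw [abs_mul, abs_two]
              linarith [abs_add_le (g a - a ^ 2) (g b - b ^ 2)]
      have t2 : (b - a) ^ 2 / 2 ≤ |g a - a ^ 2 + (g b - b ^ 2) - 2 * (g mid - mid ^ 2)| := by
        rw [hsum2, abs_neg, abs_of_nonneg (by positivity)]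
      linarith
    have hva : Ea ≤ v := le_max_left _ _
    have hvb : Eb ≤ v := le_trans (le_max_left _ _) (le_max_right _ _)
    have hvm : Em ≤ v := le_trans (le_max_right _ _) (le_max_right _ _)
    linarith
  have hlow : 1 / (8 * (k : ℝ) ^ 2) ≤ v := by
    have h4 : (1 / (k : ℝ)) ^ 2 ≤ (b - a) ^ 2 := by
      apply pow_le_pow_left₀ (by positivity) hab
    have h5 : (1 / (k : ℝ)) ^ 2 = 1 / (k : ℝ) ^ 2 := by rw [div_pow, one_pow]
    rw [h5] at h4
    have : 1 / (8 * (k : ℝ) ^ 2) = (1 / (k : ℝ) ^ 2) / 8 := by ring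
    rw [this]
    linarith
  have hvsup : v ≤ ⨆ x : Set.Icc (0 : ℝ) 1, |g x - (x : ℝ) ^ 2| := by
    apply max_le
    · exact le_ciSup hBdd (⟨a, ha01⟩ : Set.Icc (0 : ℝ) 1)
    · apply max_le
      · exact le_ciSup hBdd (⟨b, hb01⟩ : Set.Icc (0 : ℝ) 1)
      · exact le_ciSup hBdd (⟨mid, hm01⟩ : Set.Icc (0 : ℝ) 1)
  linarith
end

section
/- For any real numbers a < b, the infimum over all affine functions ℓ(x) = α·x + β (α, β ∈ ℝ) of the integral ∫_a^b |x² − ℓ(x)| dx equals (b − a)³/16; in particular, every affine ℓ satisfies ∫_a^b |x² − ℓ(x)| dx ≥ (b − a)³/16, and there is an affine function attaining this value. -/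
open MeasureTheory

private lemma poly_int (α β p q : ℝ) :
    ∫ x in p..q, (x ^ 2 - (α * x + β)) =
      (q ^ 3 - p ^ 3) / 3 - α * (q ^ 2 - p ^ 2) / 2 - β * (q - p) := by
  have h1 : IntervalIntegrable (fun x : ℝ => x ^ 2) volume p q :=
    (continuous_pow 2).intervalIntegrable _ _
  have h2 : IntervalIntegrable (fun x : ℝ => α * x + β) volume p q :=
    ((continuous_const.mul continuous_id).add continuous_const).intervalIntegrable _ _
  have h3 : IntervalIntegrable (fun x : ℝ => α * x) volume p q :=
    (continuous_const.mul continuous_id).intervalIntegrable _ _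
  rw [intervalIntegral.integral_sub h1 h2,
    intervalIntegral.integral_add h3 intervalIntegrable_const,
    intervalIntegral.integral_const_mul, integral_pow, integral_id,
    intervalIntegral.integral_const]
  push_cast
  simp [smul_eq_mul]
  ring

/-- For `a < b`, the infimum over affine functions `ℓ(x) = α·x + β` of
`∫_a^b |x² − ℓ(x)| dx` equals `(b − a)³/16`; it is a lower bound for all affine functions and
is attained by some affine function (i.e. `(b−a)³/16` is the least element of the set of
attainable values). -/
theorem best_affine_L1_approx_sq (a b : ℝ) (hab : a < b) :
    IsLeast {y : ℝ | ∃ α β : ℝ, y = ∫ x in a..b, |x ^ 2 - (α * x + β)|}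
      ((b - a) ^ 3 / 16) := by
  set c1 : ℝ := (3 * a + b) / 4 with hc1
  set c2 : ℝ := (a + 3 * b) / 4 with hc2
  have hac1 : a ≤ c1 := by rw [hc1]; linarith
  have hc12 : c1 ≤ c2 := by rw [hc1, hc2]; linarith
  have hc2b : c2 ≤ b := by rw [hc2]; linarith
  constructor
  · -- attained at α = a + b, β = -(a+b)^2/4 + (b-a)^2/16
    refine ⟨a + b, -(a + b) ^ 2 / 4 + (b - a) ^ 2 / 16, ?_⟩
    set α : ℝ := a + b
    set β : ℝ := -(a + b) ^ 2 / 4 + (b - a) ^ 2 / 16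
    have hg : ∀ x : ℝ, x ^ 2 - (α * x + β) = (x - c1) * (x - c2) := by
      intro x; rw [hc1, hc2]; show x ^ 2 - ((a+b) * x + (-(a + b) ^ 2 / 4 + (b - a) ^ 2 / 16)) = _
      ring
    have hcont : Continuous fun x : ℝ => |x ^ 2 - (α * x + β)| := by fun_prop
    have hInt : ∀ p q : ℝ, IntervalIntegrable (fun x : ℝ => |x ^ 2 - (α * x + β)|) volume p q :=
      fun p q => hcont.intervalIntegrable _ _
    have split : (∫ x in a..b, |x ^ 2 - (α * x + β)|) =
        (∫ x in a..c1, |x ^ 2 - (α * x + β)|) + (∫ x in c1..c2, |x ^ 2 - (α * x + β)|)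
          + (∫ x in c2..b, |x ^ 2 - (α * x + β)|) := by
      rw [intervalIntegral.integral_add_adjacent_intervals (hInt a c1) (hInt c1 c2),
        intervalIntegral.integral_add_adjacent_intervals ((hInt a c1).trans (hInt c1 c2))
          (hInt c2 b)]
    have e1 : (∫ x in a..c1, |x ^ 2 - (α * x + β)|) = ∫ x in a..c1, (x ^ 2 - (α * x + β)) := by
      apply intervalIntegral.integral_congr
      intro x hx
      dsimp only
      rw [Set.uIcc_of_le hac1] at hx
      have := hx.2
      rw [abs_of_nonneg]
      rw [hg x]; nlinarith [hx.2, hc12]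
    have e2 : (∫ x in c1..c2, |x ^ 2 - (α * x + β)|) = ∫ x in c1..c2, -(x ^ 2 - (α * x + β)) := by
      apply intervalIntegral.integral_congr
      intro x hx
      dsimp only
      rw [Set.uIcc_of_le hc12] at hx
      rw [abs_of_nonpos]
      rw [hg x]; nlinarith [hx.1, hx.2]
    have e3 : (∫ x in c2..b, |x ^ 2 - (α * x + β)|) = ∫ x in c2..b, (x ^ 2 - (α * x + β)) := by
      apply intervalIntegral.integral_congr
      intro x hx
      dsimp only
      rw [Set.uIcc_of_le hc2b] at hx
      rw [abs_of_nonneg]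
      rw [hg x]; nlinarith [hx.1, hc12]
    rw [split, e1, e2, e3, intervalIntegral.integral_neg, poly_int, poly_int, poly_int]
    rw [hc1, hc2]
    show (b - a) ^ 3 / 16 = _
    ring
  · rintro y ⟨α, β, rfl⟩
    have hcontg : Continuous fun x : ℝ => x ^ 2 - (α * x + β) := by fun_prop
    have hcont : Continuous fun x : ℝ => |x ^ 2 - (α * x + β)| := by fun_prop
    have hInt : ∀ p q : ℝ, IntervalIntegrable (fun x : ℝ => |x ^ 2 - (α * x + β)|) volume p q :=
      fun p q => hcont.intervalIntegrable _ _
    have hIntg : ∀ p q : ℝ, IntervalIntegrable (fun x : ℝ => x ^ 2 - (α * x + β)) volume p q :=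
      fun p q => hcontg.intervalIntegrable _ _
    have split : (∫ x in a..b, |x ^ 2 - (α * x + β)|) =
        (∫ x in a..c1, |x ^ 2 - (α * x + β)|) + (∫ x in c1..c2, |x ^ 2 - (α * x + β)|)
          + (∫ x in c2..b, |x ^ 2 - (α * x + β)|) := by
      rw [intervalIntegral.integral_add_adjacent_intervals (hInt a c1) (hInt c1 c2),
        intervalIntegral.integral_add_adjacent_intervals ((hInt a c1).trans (hInt c1 c2))
          (hInt c2 b)]
    have m1 : (∫ x in a..c1, (x ^ 2 - (α * x + β))) ≤ ∫ x in a..c1, |x ^ 2 - (α * x + β)| :=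
      intervalIntegral.integral_mono_on hac1 (hIntg a c1) (hInt a c1)
        (fun x _ => le_abs_self _)
    have m2 : (∫ x in c1..c2, -(x ^ 2 - (α * x + β))) ≤ ∫ x in c1..c2, |x ^ 2 - (α * x + β)| :=
      intervalIntegral.integral_mono_on hc12 ((hIntg c1 c2).neg) (hInt c1 c2)
        (fun x _ => neg_le_abs _)
    have m3 : (∫ x in c2..b, (x ^ 2 - (α * x + β))) ≤ ∫ x in c2..b, |x ^ 2 - (α * x + β)| :=
      intervalIntegral.integral_mono_on hc2b (hIntg c2 b) (hInt c2 b)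
        (fun x _ => le_abs_self _)
    rw [intervalIntegral.integral_neg] at m2
    have hval : (∫ x in a..c1, (x ^ 2 - (α * x + β))) - (∫ x in c1..c2, (x ^ 2 - (α * x + β)))
        + (∫ x in c2..b, (x ^ 2 - (α * x + β))) = (b - a) ^ 3 / 16 := by
      rw [poly_int, poly_int, poly_int, hc1, hc2]
      ring
    rw [split]
    linarith
end

section
/- For every positive integer m and every x ∈ [0,1], | ( −1/(8m²) + x/m + (2/m) ∑_{k=1}^{m−1} (x − k/m)_+ ) − x² | ≤ 1/(8m²). -/
/-- For every positive integer `m` and every `x ∈ [0,1]`,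
`| (−1/(8m²) + x/m + (2/m) ∑_{k=1}^{m−1} (x − k/m)_+) − x² | ≤ 1/(8m²)`. -/
theorem piecewise_linear_sq_approx (m : ℕ) (hm : 0 < m) (x : ℝ) (hx : x ∈ Set.Icc (0 : ℝ) 1) :
    |(-(1 / (8 * (m : ℝ) ^ 2)) + x / m
        + (2 / m) * ∑ k ∈ Finset.Icc 1 (m - 1), max (x - (k : ℝ) / m) 0) - x ^ 2|
      ≤ 1 / (8 * (m : ℝ) ^ 2) := by
  obtain ⟨hx0, hx1⟩ := hx
  have hmR : (0:ℝ) < m := by exact_mod_cast hm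
  have hmx0 : (0:ℝ) ≤ m * x := by positivity
  set j : ℕ := ⌊(m:ℝ) * x⌋₊ with hj
  set t : ℕ := min j (m-1) with ht
  have htm : t ≤ m - 1 := min_le_right _ _
  -- evaluate the sum
  have hsum : ∑ k ∈ Finset.Icc 1 (m-1), max (x - (k:ℝ)/m) 0
      = ∑ k ∈ Finset.Icc 1 t, (x - (k:ℝ)/m) := by
    rw [← Finset.sum_subset (Finset.Icc_subset_Icc_right htm)]
    · refine Finset.sum_congr rfl fun k hk => ?_
      simp only [Finset.mem_Icc] at hk
      have hkj : k ≤ j := le_trans hk.2 (min_le_left _ _)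
      have h1 : (k:ℝ) ≤ (j:ℝ) := by exact_mod_cast hkj
      have h2 : (j:ℝ) ≤ m * x := Nat.floor_le hmx0
      have : (k:ℝ)/m ≤ x := by
        rw [div_le_iff₀ hmR]; linarith [mul_comm x (m:ℝ)]
      exact max_eq_left (by linarith)
    · intro k hk hk'
      simp only [Finset.mem_Icc] at hk hk'
      have hjk : j < k := by omega
      have h1 : (m:ℝ) * x < (k:ℝ) := by
        have := Nat.lt_floor_add_one ((m:ℝ) * x)
        have h2 : (j:ℝ) + 1 ≤ (k:ℝ) := by exact_mod_cast hjk
        linarith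
      have : x < (k:ℝ)/m := by
        rw [lt_div_iff₀ hmR]; linarith [mul_comm x (m:ℝ)]
      exact max_eq_right (by linarith)
  have hcard : (Finset.Icc 1 t).card = t := by simp
  have hgauss : ∑ k ∈ Finset.Icc 1 t, (k:ℝ) = t*(t+1)/2 := by
    induction t with
    | zero => simp
    | succ n ih =>
      rw [Finset.sum_Icc_succ_top (by omega)]
      push_cast
      push_cast at ih
      rw [ih]; ring
  have hsum2 : ∑ k ∈ Finset.Icc 1 t, (x - (k:ℝ)/m)
      = t * x - (t*(t+1)/2)/m := by
    rw [Finset.sum_sub_distrib, Finset.sum_const, hcard, ← Finset.sum_div, hgauss]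
    simp [nsmul_eq_mul, mul_comm]
  -- position of x in [t/m, (t+1)/m]
  have ha : (t:ℝ)/m ≤ x := by
    have h1 : (t:ℝ) ≤ (j:ℝ) := by exact_mod_cast (min_le_left j (m-1))
    have h2 : (j:ℝ) ≤ m * x := Nat.floor_le hmx0
    rw [div_le_iff₀ hmR]; linarith [mul_comm x (m:ℝ)]
  have hb : x ≤ ((t:ℝ)+1)/m := by
    rcases le_or_gt j (m-1) with h | h
    · have htj : t = j := by omega
      have := Nat.lt_floor_add_one ((m:ℝ) * x)
      rw [le_div_iff₀ hmR]
      rw [htj]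
      linarith [mul_comm x (m:ℝ)]
    · have htj : (t:ℝ) + 1 = (m:ℝ) := by
        have : t = m - 1 := by omega
        rw [this]
        have : ((m-1:ℕ):ℝ) = (m:ℝ) - 1 := by
          have : (1:ℕ) ≤ m := hm
          push_cast [Nat.cast_sub this]
          ring
        rw [this]; ring
      rw [htj, le_div_iff₀ hmR]
      nlinarith
  -- rewrite the expression
  have hkey : (-(1 / (8 * (m : ℝ) ^ 2)) + x / m
        + (2 / m) * ∑ k ∈ Finset.Icc 1 (m - 1), max (x - (k : ℝ) / m) 0) - x ^ 2
      = -(1 / (8 * (m : ℝ) ^ 2)) + (x - (t:ℝ)/m) * (((t:ℝ)+1)/m - x) := by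
    rw [hsum, hsum2]
    field_simp
    ring
  rw [hkey]
  obtain ⟨u, hu⟩ : ∃ u:ℝ, u = x - (t:ℝ)/m := ⟨_, rfl⟩
  obtain ⟨v, hv⟩ : ∃ v:ℝ, v = ((t:ℝ)+1)/m - x := ⟨_, rfl⟩
  rw [← hu, ← hv]
  have hu0 : 0 ≤ u := by rw [hu]; linarith
  have hv0 : 0 ≤ v := by rw [hv]; linarith
  have huv : u + v = 1/m := by rw [hu, hv]; field_simp; ring
  have huv2 : (u + v)^2 = 1/((m:ℝ)^2) := by rw [huv, div_pow]; ring_nf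
  have h14 : 1/((m:ℝ)^2) = 4 * (1/(4*(m:ℝ)^2)) := by ring
  have hP : u * v ≤ 1/(4*(m:ℝ)^2) := by nlinarith [sq_nonneg (u - v), huv2, h14]
  have h48 : 1/(4*(m:ℝ)^2) = 2 * (1/(8*(m:ℝ)^2)) := by ring
  rw [abs_le]
  constructor
  · nlinarith [mul_nonneg hu0 hv0]
  · linarith
end

section
/- For any L ∈ ℕ with L ≥ 1 and any even positive integers d_1, …, d_L, there exists a maxout HyCNN h : ℝ → ℝ with input dimension 1, L hidden layers and d_ℓ neurons in layer ℓ such that sup_{x ∈ [0,1]} |h(x) − x²| ≤ 1/(8 ∏_{ℓ=1}^{L} d_ℓ²). -/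
noncomputable def AA (u : ℝ) : ℝ :=
  ((⌊u⌋^2 / 2 : ℤ) : ℝ) + ((⌊u⌋ + ⌊u⌋ % 2 : ℤ) : ℝ) * (u - ⌊u⌋)

noncomputable def BB (u : ℝ) : ℝ :=
  (((⌊u⌋^2 + 1) / 2 : ℤ) : ℝ) + ((⌊u⌋ + 1 - ⌊u⌋ % 2 : ℤ) : ℝ) * (u - ⌊u⌋)

lemma zdiv2 (m : ℤ) : (2*m)/2 = m := by omega
lemma zdiv2' (m : ℤ) : (2*m+1)/2 = m := by omega
lemma zmod2 (m : ℤ) : (2*m)%2 = 0 := by omega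
lemma zmod2' (m : ℤ) : (2*m+1)%2 = 1 := by omega

lemma sum_range_cast (n : ℕ) : ∑ i ∈ Finset.range n, (i:ℝ) = n*(n-1)/2 := by
  induction n with
  | zero => simp
  | succ n ih => rw [Finset.sum_range_succ, ih]; push_cast; ring

lemma sum_cut (a c : ℕ) (hc : c ≤ a) (t Y β : ℝ)
    (h1 : ∀ i : ℕ, i < c → 2*(i:ℝ)+β ≤ t)
    (h2 : ∀ i : ℕ, c ≤ i → i < a → t ≤ 2*(i:ℝ)+β) :
    ∑ i ∈ Finset.range a, 2 * max (Y + ((2*(i:ℝ)+β) - t)) Y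
      = 2*(a:ℝ)*Y + 2*( ((a:ℝ)^2 - a - ((c:ℝ)^2 - c)) + β*((a:ℝ)-c) - ((a:ℝ)-c)*t ) := by
  rw [Finset.range_eq_Ico, ← Finset.sum_Ico_consecutive _ (Nat.zero_le c) hc]
  have e1 : ∑ i ∈ Finset.Ico 0 c, 2 * max (Y + ((2*(i:ℝ)+β) - t)) Y
      = ∑ i ∈ Finset.Ico 0 c, 2 * Y := by
    refine Finset.sum_congr rfl fun i hi => ?_
    simp only [Finset.mem_Ico] at hi
    rw [max_eq_right (by have := h1 i hi.2; linarith)]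
  have e2 : ∑ i ∈ Finset.Ico c a, 2 * max (Y + ((2*(i:ℝ)+β) - t)) Y
      = ∑ i ∈ Finset.Ico c a, (2*Y + 2*((2*(i:ℝ)+β) - t)) := by
    refine Finset.sum_congr rfl fun i hi => ?_
    simp only [Finset.mem_Ico] at hi
    rw [max_eq_left (by have := h2 i hi.1 hi.2; linarith)]; ring
  rw [e1, e2, Finset.sum_const, Finset.sum_add_distrib, Finset.sum_const]
  have hsum : ∑ i ∈ Finset.Ico c a, (2*((2*(i:ℝ)+β) - t))
      = 2*( ((a:ℝ)^2 - a - ((c:ℝ)^2 - c)) + β*((a:ℝ)-c) - ((a:ℝ)-c)*t ) := by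
    have h3 : ∑ i ∈ Finset.Ico c a, (2*((2*(i:ℝ)+β) - t))
        = ∑ i ∈ Finset.Ico c a, (4*(i:ℝ) + (2*β-2*t)) :=
      Finset.sum_congr rfl (fun i _ => by ring)
    rw [h3, Finset.sum_add_distrib, Finset.sum_const, Nat.card_Ico, nsmul_eq_mul,
      Nat.cast_sub hc, Finset.sum_Ico_eq_sub _ hc]
    rw [← Finset.mul_sum, ← Finset.mul_sum, sum_range_cast, sum_range_cast]
    ring
  rw [hsum, Nat.card_Ico, Nat.card_Ico, nsmul_eq_mul, nsmul_eq_mul,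
    Nat.cast_sub hc, Nat.sub_zero]
  ring

lemma starA (a : ℕ) (ha : 1 ≤ a) (u : ℝ) :
    AA (2*(a:ℝ)*u) = (∑ i ∈ Finset.range a,
      2 * max (2*(a:ℝ)*AA u + (2*(i:ℝ)+1)) (2*(a:ℝ)*BB u)) - 2*(a:ℝ)^2 := by
  set q := ⌊u⌋ with hqdef
  have hq1 : (q:ℝ) ≤ u := Int.floor_le u
  have hq2 : u < q + 1 := Int.lt_floor_add_one u
  set θ : ℝ := u - q with hθdef
  have hθ0 : 0 ≤ θ := by simp only [hθdef]; linarith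
  have hθ1 : θ < 1 := by simp only [hθdef]; linarith
  have hu : u = (q:ℝ) + θ := by rw [hθdef]; ring
  have hge : (0:ℤ) ≤ ⌊2*(a:ℝ)*θ⌋ := Int.floor_nonneg.2 (by positivity)
  set rn : ℕ := (⌊2*(a:ℝ)*θ⌋).toNat with hrndef
  have hrnz : (rn : ℤ) = ⌊2*(a:ℝ)*θ⌋ := Int.toNat_of_nonneg hge
  have hrle : (rn:ℝ) ≤ 2*a*θ := by
    have := Int.floor_le (2*(a:ℝ)*θ)
    rw [← hrnz] at this; exact_mod_cast this
  have hrlt : 2*(a:ℝ)*θ < rn + 1 := by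
    have := Int.lt_floor_add_one (2*(a:ℝ)*θ)
    rw [← hrnz] at this; exact_mod_cast this
  have ha' : (1:ℝ) ≤ a := by exact_mod_cast ha
  have hrbn : rn < 2*a := by
    have h2 : (rn:ℝ) < 2*a := by nlinarith
    exact_mod_cast h2
  have hK : ⌊2*(a:ℝ)*u⌋ = 2*(a:ℤ)*q + rn := by
    have h2au : 2*(a:ℝ)*u = ((2*(a:ℤ)*q : ℤ):ℝ) + 2*(a:ℝ)*θ := by push_cast; rw [hu]; ring
    rw [h2au, Int.floor_intCast_add, hrnz]
  have hL : AA (2*(a:ℝ)*u)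
      = (((2*(a:ℤ)*q + rn)^2/2 : ℤ):ℝ)
        + (((2*(a:ℤ)*q + rn) + (2*(a:ℤ)*q + rn)%2 : ℤ):ℝ)
          * (2*(a:ℝ)*u - ((2*(a:ℤ)*q + rn : ℤ):ℝ)) := by
    simp only [AA, hK]
  rcases Int.even_or_odd q with ⟨s, hs⟩ | ⟨s, hs⟩ <;>
    rcases Nat.even_or_odd rn with ⟨c, hc⟩ | ⟨c, hc⟩
  · -- q = s+s, rn = c+c
    have hqz : q = 2*s := by omega
    have hcz : (rn:ℤ) = 2*(c:ℤ) := by exact_mod_cast (show rn = 2*c by omega)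
    have hqd : q^2/2 = 2*s^2 := by
      rw [show q^2 = 2*(2*s^2) by rw [hqz]; ring, zdiv2]
    have hqd1 : (q^2+1)/2 = 2*s^2 := by
      rw [show q^2+1 = 2*(2*s^2)+1 by rw [hqz]; ring, zdiv2']
    have hqm : q%2 = 0 := by omega
    have hAA : AA u = 2*(s:ℝ)^2 + (2*(s:ℝ))*θ := by
      simp only [AA, ← hqdef, ← hθdef, hqd, hqm]
      push_cast [hqz]; ring
    have hBB : BB u = 2*(s:ℝ)^2 + (2*(s:ℝ)+1)*θ := by
      simp only [BB, ← hqdef, ← hθdef, hqd1, hqm]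
      push_cast [hqz]; ring
    have hKd : (2*(a:ℤ)*q + rn)^2/2 = 2*(2*(a:ℤ)*s+c)^2 := by
      rw [show (2*(a:ℤ)*q + rn)^2 = 2*(2*(2*(a:ℤ)*s+c)^2) by rw [hqz, hcz]; ring, zdiv2]
    have hKm : (2*(a:ℤ)*q + rn)%2 = 0 := by
      rw [show 2*(a:ℤ)*q + (rn:ℤ) = 2*(2*(a:ℤ)*s+c) by rw [hqz, hcz]; ring]; exact zmod2 _
    have hca : c ≤ a := by omega
    have hrr : (rn:ℝ) = 2*(c:ℝ) := by exact_mod_cast hcz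
    have hsum : ∑ i ∈ Finset.range a, 2 * max (2*(a:ℝ)*AA u + (2*(i:ℝ)+1)) (2*(a:ℝ)*BB u)
        = ∑ i ∈ Finset.range a,
            2 * max ((2*(a:ℝ)*BB u) + ((2*(i:ℝ)+1) - 2*(a:ℝ)*θ)) (2*(a:ℝ)*BB u) :=
      Finset.sum_congr rfl (fun i _ => by rw [show 2*(a:ℝ)*AA u + (2*(i:ℝ)+1)
        = (2*(a:ℝ)*BB u) + ((2*(i:ℝ)+1) - 2*(a:ℝ)*θ) by rw [hAA, hBB]; ring])
    rw [hL, hsum, sum_cut a c hca (2*(a:ℝ)*θ) _ 1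
      (fun i hi => by
        have h' : (i:ℝ)+1 ≤ c := by exact_mod_cast hi
        linarith)
      (fun i hci _ => by
        have h' : (c:ℝ) ≤ i := by exact_mod_cast hci
        linarith)]
    rw [hKd, hKm, hBB, hu]
    have hqr : (q:ℝ) = 2*(s:ℝ) := by exact_mod_cast hqz
    push_cast
    rw [hqr, hrr]
    ring
  · -- q = s+s, rn = 2c+1
    have hqz : q = 2*s := by omega
    have hcz : (rn:ℤ) = 2*(c:ℤ)+1 := by exact_mod_cast hc
    have hqd : q^2/2 = 2*s^2 := by
      rw [show q^2 = 2*(2*s^2) by rw [hqz]; ring, zdiv2]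
    have hqd1 : (q^2+1)/2 = 2*s^2 := by
      rw [show q^2+1 = 2*(2*s^2)+1 by rw [hqz]; ring, zdiv2']
    have hqm : q%2 = 0 := by omega
    have hAA : AA u = 2*(s:ℝ)^2 + (2*(s:ℝ))*θ := by
      simp only [AA, ← hqdef, ← hθdef, hqd, hqm]
      push_cast [hqz]; ring
    have hBB : BB u = 2*(s:ℝ)^2 + (2*(s:ℝ)+1)*θ := by
      simp only [BB, ← hqdef, ← hθdef, hqd1, hqm]
      push_cast [hqz]; ring
    have hKd : (2*(a:ℤ)*q + rn)^2/2 = 2*(2*(a:ℤ)*s+c)^2 + 2*(2*(a:ℤ)*s+c) := by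
      rw [show (2*(a:ℤ)*q + rn)^2
        = 2*(2*(2*(a:ℤ)*s+c)^2 + 2*(2*(a:ℤ)*s+c))+1 by rw [hqz, hcz]; ring, zdiv2']
    have hKm : (2*(a:ℤ)*q + rn)%2 = 1 := by
      rw [show 2*(a:ℤ)*q + (rn:ℤ) = 2*(2*(a:ℤ)*s+c)+1 by rw [hqz, hcz]; ring]; exact zmod2' _
    have hca : c+1 ≤ a := by omega
    have hrr : (rn:ℝ) = 2*(c:ℝ)+1 := by exact_mod_cast hcz
    have hsum : ∑ i ∈ Finset.range a, 2 * max (2*(a:ℝ)*AA u + (2*(i:ℝ)+1)) (2*(a:ℝ)*BB u)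
        = ∑ i ∈ Finset.range a,
            2 * max ((2*(a:ℝ)*BB u) + ((2*(i:ℝ)+1) - 2*(a:ℝ)*θ)) (2*(a:ℝ)*BB u) :=
      Finset.sum_congr rfl (fun i _ => by rw [show 2*(a:ℝ)*AA u + (2*(i:ℝ)+1)
        = (2*(a:ℝ)*BB u) + ((2*(i:ℝ)+1) - 2*(a:ℝ)*θ) by rw [hAA, hBB]; ring])
    rw [hL, hsum, sum_cut a (c+1) hca (2*(a:ℝ)*θ) _ 1
      (fun i hi => by
        have h' : (i:ℝ)+1 ≤ (c:ℝ)+1 := by exact_mod_cast hi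
        linarith)
      (fun i hci _ => by
        have h' : (c:ℝ)+1 ≤ i := by exact_mod_cast hci
        linarith)]
    rw [hKd, hKm, hBB, hu]
    have hqr : (q:ℝ) = 2*(s:ℝ) := by exact_mod_cast hqz
    push_cast
    rw [hqr, hrr]
    ring
  · -- q = 2s+1, rn = c+c
    have hcz : (rn:ℤ) = 2*(c:ℤ) := by exact_mod_cast (show rn = 2*c by omega)
    have hqd : q^2/2 = 2*s^2+2*s := by
      rw [show q^2 = 2*(2*s^2+2*s)+1 by rw [hs]; ring, zdiv2']
    have hqd1 : (q^2+1)/2 = 2*s^2+2*s+1 := by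
      rw [show q^2+1 = 2*(2*s^2+2*s+1) by rw [hs]; ring, zdiv2]
    have hqm : q%2 = 1 := by omega
    have hAA : AA u = (2*(s:ℝ)^2+2*(s:ℝ)) + (2*(s:ℝ)+2)*θ := by
      simp only [AA, ← hqdef, ← hθdef, hqd, hqm]
      push_cast [hs]; ring
    have hBB : BB u = (2*(s:ℝ)^2+2*(s:ℝ)+1) + (2*(s:ℝ)+1)*θ := by
      simp only [BB, ← hqdef, ← hθdef, hqd1, hqm]
      push_cast [hs]; ring
    have hKd : (2*(a:ℤ)*q + rn)^2/2 = 2*(2*(a:ℤ)*s+a+c)^2 := by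
      rw [show (2*(a:ℤ)*q + rn)^2 = 2*(2*(2*(a:ℤ)*s+a+c)^2) by rw [hs, hcz]; ring, zdiv2]
    have hKm : (2*(a:ℤ)*q + rn)%2 = 0 := by
      rw [show 2*(a:ℤ)*q + (rn:ℤ) = 2*(2*(a:ℤ)*s+a+c) by rw [hs, hcz]; ring]; exact zmod2 _
    have hcle : c ≤ a := by omega
    have hrr : (rn:ℝ) = 2*(c:ℝ) := by exact_mod_cast hcz
    have hsum : ∑ i ∈ Finset.range a, 2 * max (2*(a:ℝ)*AA u + (2*(i:ℝ)+1)) (2*(a:ℝ)*BB u)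
        = ∑ i ∈ Finset.range a,
            2 * max ((2*(a:ℝ)*BB u) + ((2*(i:ℝ)+1) - (2*(a:ℝ) - 2*(a:ℝ)*θ))) (2*(a:ℝ)*BB u) :=
      Finset.sum_congr rfl (fun i _ => by rw [show 2*(a:ℝ)*AA u + (2*(i:ℝ)+1)
        = (2*(a:ℝ)*BB u) + ((2*(i:ℝ)+1) - (2*(a:ℝ) - 2*(a:ℝ)*θ)) by rw [hAA, hBB]; ring])
    have hsub : ((a - c : ℕ):ℝ) = (a:ℝ) - c := by
      rw [Nat.cast_sub hcle]
    rw [hL, hsum, sum_cut a (a-c) (Nat.sub_le a c) (2*(a:ℝ) - 2*(a:ℝ)*θ) _ 1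
      (fun i hi => by
        have h' : (i:ℝ)+1 ≤ ((a-c:ℕ):ℝ) := by exact_mod_cast hi
        rw [hsub] at h'
        linarith)
      (fun i hci _ => by
        have h' : ((a-c:ℕ):ℝ) ≤ i := by exact_mod_cast hci
        rw [hsub] at h'
        linarith)]
    rw [hKd, hKm, hBB, hu, hsub]
    have hqr : (q:ℝ) = 2*(s:ℝ)+1 := by exact_mod_cast hs
    push_cast
    rw [hqr, hrr]
    ring
  · -- q = 2s+1, rn = 2c+1
    have hcz : (rn:ℤ) = 2*(c:ℤ)+1 := by exact_mod_cast hc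
    have hqd : q^2/2 = 2*s^2+2*s := by
      rw [show q^2 = 2*(2*s^2+2*s)+1 by rw [hs]; ring, zdiv2']
    have hqd1 : (q^2+1)/2 = 2*s^2+2*s+1 := by
      rw [show q^2+1 = 2*(2*s^2+2*s+1) by rw [hs]; ring, zdiv2]
    have hqm : q%2 = 1 := by omega
    have hAA : AA u = (2*(s:ℝ)^2+2*(s:ℝ)) + (2*(s:ℝ)+2)*θ := by
      simp only [AA, ← hqdef, ← hθdef, hqd, hqm]
      push_cast [hs]; ring
    have hBB : BB u = (2*(s:ℝ)^2+2*(s:ℝ)+1) + (2*(s:ℝ)+1)*θ := by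
      simp only [BB, ← hqdef, ← hθdef, hqd1, hqm]
      push_cast [hs]; ring
    have hKd : (2*(a:ℤ)*q + rn)^2/2 = 2*(2*(a:ℤ)*s+a+c)^2 + 2*(2*(a:ℤ)*s+a+c) := by
      rw [show (2*(a:ℤ)*q + rn)^2
        = 2*(2*(2*(a:ℤ)*s+a+c)^2 + 2*(2*(a:ℤ)*s+a+c))+1 by rw [hs, hcz]; ring, zdiv2']
    have hKm : (2*(a:ℤ)*q + rn)%2 = 1 := by
      rw [show 2*(a:ℤ)*q + (rn:ℤ) = 2*(2*(a:ℤ)*s+a+c)+1 by rw [hs, hcz]; ring]; exact zmod2' _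
    have hcle : c+1 ≤ a := by omega
    have hrr : (rn:ℝ) = 2*(c:ℝ)+1 := by exact_mod_cast hcz
    have hsum : ∑ i ∈ Finset.range a, 2 * max (2*(a:ℝ)*AA u + (2*(i:ℝ)+1)) (2*(a:ℝ)*BB u)
        = ∑ i ∈ Finset.range a,
            2 * max ((2*(a:ℝ)*BB u) + ((2*(i:ℝ)+1) - (2*(a:ℝ) - 2*(a:ℝ)*θ))) (2*(a:ℝ)*BB u) :=
      Finset.sum_congr rfl (fun i _ => by rw [show 2*(a:ℝ)*AA u + (2*(i:ℝ)+1)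
        = (2*(a:ℝ)*BB u) + ((2*(i:ℝ)+1) - (2*(a:ℝ) - 2*(a:ℝ)*θ)) by rw [hAA, hBB]; ring])
    have hsub : ((a - (c+1) : ℕ):ℝ) = (a:ℝ) - (c+1) := by
      rw [Nat.cast_sub hcle]; push_cast; ring
    rw [hL, hsum, sum_cut a (a-(c+1)) (Nat.sub_le a (c+1)) (2*(a:ℝ) - 2*(a:ℝ)*θ) _ 1
      (fun i hi => by
        have h' : (i:ℝ)+1 ≤ ((a-(c+1):ℕ):ℝ) := by exact_mod_cast hi
        rw [hsub] at h'
        linarith)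
      (fun i hci _ => by
        have h' : ((a-(c+1):ℕ):ℝ) ≤ i := by exact_mod_cast hci
        rw [hsub] at h'
        linarith)]
    rw [hKd, hKm, hBB, hu, hsub]
    have hqr : (q:ℝ) = 2*(s:ℝ)+1 := by exact_mod_cast hs
    push_cast
    rw [hqr, hrr]
    ring

lemma starB (a : ℕ) (ha : 1 ≤ a) (u : ℝ) :
    BB (2*(a:ℝ)*u) = (∑ i ∈ Finset.range (a-1),
      2 * max (2*(a:ℝ)*AA u + (2*(i:ℝ)+2)) (2*(a:ℝ)*BB u))
      + 2*(a:ℝ)*(AA u + BB u) - 2*(a:ℝ)*((a:ℝ)-1) := by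
  set q := ⌊u⌋ with hqdef
  have hq1 : (q:ℝ) ≤ u := Int.floor_le u
  have hq2 : u < q + 1 := Int.lt_floor_add_one u
  set θ : ℝ := u - q with hθdef
  have hθ0 : 0 ≤ θ := by simp only [hθdef]; linarith
  have hθ1 : θ < 1 := by simp only [hθdef]; linarith
  have hu : u = (q:ℝ) + θ := by rw [hθdef]; ring
  have hge : (0:ℤ) ≤ ⌊2*(a:ℝ)*θ⌋ := Int.floor_nonneg.2 (by positivity)
  set rn : ℕ := (⌊2*(a:ℝ)*θ⌋).toNat with hrndef
  have hrnz : (rn : ℤ) = ⌊2*(a:ℝ)*θ⌋ := Int.toNat_of_nonneg hge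
  have hrle : (rn:ℝ) ≤ 2*a*θ := by
    have := Int.floor_le (2*(a:ℝ)*θ)
    rw [← hrnz] at this; exact_mod_cast this
  have hrlt : 2*(a:ℝ)*θ < rn + 1 := by
    have := Int.lt_floor_add_one (2*(a:ℝ)*θ)
    rw [← hrnz] at this; exact_mod_cast this
  have ha' : (1:ℝ) ≤ a := by exact_mod_cast ha
  have hrbn : rn < 2*a := by
    have h2 : (rn:ℝ) < 2*a := by nlinarith
    exact_mod_cast h2
  have hK : ⌊2*(a:ℝ)*u⌋ = 2*(a:ℤ)*q + rn := by
    have h2au : 2*(a:ℝ)*u = ((2*(a:ℤ)*q : ℤ):ℝ) + 2*(a:ℝ)*θ := by push_cast; rw [hu]; ring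
    rw [h2au, Int.floor_intCast_add, hrnz]
  have hL : BB (2*(a:ℝ)*u)
      = ((((2*(a:ℤ)*q + rn)^2 + 1)/2 : ℤ):ℝ)
        + (((2*(a:ℤ)*q + rn) + 1 - (2*(a:ℤ)*q + rn)%2 : ℤ):ℝ)
          * (2*(a:ℝ)*u - ((2*(a:ℤ)*q + rn : ℤ):ℝ)) := by
    simp only [BB, hK]
  have hsa : ((a-1:ℕ):ℝ) = (a:ℝ)-1 := by rw [Nat.cast_sub ha]; push_cast; ring
  rcases Int.even_or_odd q with ⟨s, hs⟩ | ⟨s, hs⟩ <;>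
    rcases Nat.even_or_odd rn with ⟨c, hc⟩ | ⟨c, hc⟩
  · -- q = s+s, rn = c+c
    have hqz : q = 2*s := by omega
    have hcz : (rn:ℤ) = 2*(c:ℤ) := by exact_mod_cast (show rn = 2*c by omega)
    have hqd : q^2/2 = 2*s^2 := by
      rw [show q^2 = 2*(2*s^2) by rw [hqz]; ring, zdiv2]
    have hqd1 : (q^2+1)/2 = 2*s^2 := by
      rw [show q^2+1 = 2*(2*s^2)+1 by rw [hqz]; ring, zdiv2']
    have hqm : q%2 = 0 := by omega
    have hAA : AA u = 2*(s:ℝ)^2 + (2*(s:ℝ))*θ := by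
      simp only [AA, ← hqdef, ← hθdef, hqd, hqm]
      push_cast [hqz]; ring
    have hBB : BB u = 2*(s:ℝ)^2 + (2*(s:ℝ)+1)*θ := by
      simp only [BB, ← hqdef, ← hθdef, hqd1, hqm]
      push_cast [hqz]; ring
    have hKd : ((2*(a:ℤ)*q + rn)^2+1)/2 = 2*(2*(a:ℤ)*s+c)^2 := by
      rw [show (2*(a:ℤ)*q + rn)^2+1 = 2*(2*(2*(a:ℤ)*s+c)^2)+1 by rw [hqz, hcz]; ring, zdiv2']
    have hKm : (2*(a:ℤ)*q + rn)%2 = 0 := by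
      rw [show 2*(a:ℤ)*q + (rn:ℤ) = 2*(2*(a:ℤ)*s+c) by rw [hqz, hcz]; ring]; exact zmod2 _
    have hca : c ≤ a-1 := by omega
    have hrr : (rn:ℝ) = 2*(c:ℝ) := by exact_mod_cast hcz
    have hsum : ∑ i ∈ Finset.range (a-1), 2 * max (2*(a:ℝ)*AA u + (2*(i:ℝ)+2)) (2*(a:ℝ)*BB u)
        = ∑ i ∈ Finset.range (a-1),
            2 * max ((2*(a:ℝ)*BB u) + ((2*(i:ℝ)+2) - 2*(a:ℝ)*θ)) (2*(a:ℝ)*BB u) :=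
      Finset.sum_congr rfl (fun i _ => by rw [show 2*(a:ℝ)*AA u + (2*(i:ℝ)+2)
        = (2*(a:ℝ)*BB u) + ((2*(i:ℝ)+2) - 2*(a:ℝ)*θ) by rw [hAA, hBB]; ring])
    rw [hL, hsum, sum_cut (a-1) c hca (2*(a:ℝ)*θ) _ 2
      (fun i hi => by
        have h' : (i:ℝ)+1 ≤ c := by exact_mod_cast hi
        linarith)
      (fun i hci _ => by
        have h' : (c:ℝ) ≤ i := by exact_mod_cast hci
        linarith)]
    rw [hKd, hKm, hAA, hBB, hu, hsa]
    have hqr : (q:ℝ) = 2*(s:ℝ) := by exact_mod_cast hqz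
    push_cast
    rw [hqr, hrr]
    ring
  · -- q = s+s, rn = 2c+1
    have hqz : q = 2*s := by omega
    have hcz : (rn:ℤ) = 2*(c:ℤ)+1 := by exact_mod_cast hc
    have hqd : q^2/2 = 2*s^2 := by
      rw [show q^2 = 2*(2*s^2) by rw [hqz]; ring, zdiv2]
    have hqd1 : (q^2+1)/2 = 2*s^2 := by
      rw [show q^2+1 = 2*(2*s^2)+1 by rw [hqz]; ring, zdiv2']
    have hqm : q%2 = 0 := by omega
    have hAA : AA u = 2*(s:ℝ)^2 + (2*(s:ℝ))*θ := by
      simp only [AA, ← hqdef, ← hθdef, hqd, hqm]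
      push_cast [hqz]; ring
    have hBB : BB u = 2*(s:ℝ)^2 + (2*(s:ℝ)+1)*θ := by
      simp only [BB, ← hqdef, ← hθdef, hqd1, hqm]
      push_cast [hqz]; ring
    have hKd : ((2*(a:ℤ)*q + rn)^2+1)/2 = 2*(2*(a:ℤ)*s+c)^2 + 2*(2*(a:ℤ)*s+c) + 1 := by
      rw [show (2*(a:ℤ)*q + rn)^2+1
        = 2*(2*(2*(a:ℤ)*s+c)^2 + 2*(2*(a:ℤ)*s+c) + 1) by rw [hqz, hcz]; ring, zdiv2]
    have hKm : (2*(a:ℤ)*q + rn)%2 = 1 := by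
      rw [show 2*(a:ℤ)*q + (rn:ℤ) = 2*(2*(a:ℤ)*s+c)+1 by rw [hqz, hcz]; ring]; exact zmod2' _
    have hca : c ≤ a-1 := by omega
    have hrr : (rn:ℝ) = 2*(c:ℝ)+1 := by exact_mod_cast hcz
    have hsum : ∑ i ∈ Finset.range (a-1), 2 * max (2*(a:ℝ)*AA u + (2*(i:ℝ)+2)) (2*(a:ℝ)*BB u)
        = ∑ i ∈ Finset.range (a-1),
            2 * max ((2*(a:ℝ)*BB u) + ((2*(i:ℝ)+2) - 2*(a:ℝ)*θ)) (2*(a:ℝ)*BB u) :=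
      Finset.sum_congr rfl (fun i _ => by rw [show 2*(a:ℝ)*AA u + (2*(i:ℝ)+2)
        = (2*(a:ℝ)*BB u) + ((2*(i:ℝ)+2) - 2*(a:ℝ)*θ) by rw [hAA, hBB]; ring])
    rw [hL, hsum, sum_cut (a-1) c hca (2*(a:ℝ)*θ) _ 2
      (fun i hi => by
        have h' : (i:ℝ)+1 ≤ c := by exact_mod_cast hi
        linarith)
      (fun i hci _ => by
        have h' : (c:ℝ) ≤ i := by exact_mod_cast hci
        linarith)]
    rw [hKd, hKm, hAA, hBB, hu, hsa]
    have hqr : (q:ℝ) = 2*(s:ℝ) := by exact_mod_cast hqz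
    push_cast
    rw [hqr, hrr]
    ring
  · -- q = 2s+1, rn = c+c
    have hcz : (rn:ℤ) = 2*(c:ℤ) := by exact_mod_cast (show rn = 2*c by omega)
    have hqd : q^2/2 = 2*s^2+2*s := by
      rw [show q^2 = 2*(2*s^2+2*s)+1 by rw [hs]; ring, zdiv2']
    have hqd1 : (q^2+1)/2 = 2*s^2+2*s+1 := by
      rw [show q^2+1 = 2*(2*s^2+2*s+1) by rw [hs]; ring, zdiv2]
    have hqm : q%2 = 1 := by omega
    have hAA : AA u = (2*(s:ℝ)^2+2*(s:ℝ)) + (2*(s:ℝ)+2)*θ := by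
      simp only [AA, ← hqdef, ← hθdef, hqd, hqm]
      push_cast [hs]; ring
    have hBB : BB u = (2*(s:ℝ)^2+2*(s:ℝ)+1) + (2*(s:ℝ)+1)*θ := by
      simp only [BB, ← hqdef, ← hθdef, hqd1, hqm]
      push_cast [hs]; ring
    have hKd : ((2*(a:ℤ)*q + rn)^2+1)/2 = 2*(2*(a:ℤ)*s+a+c)^2 := by
      rw [show (2*(a:ℤ)*q + rn)^2+1
        = 2*(2*(2*(a:ℤ)*s+a+c)^2) + 1 by rw [hs, hcz]; ring, zdiv2']
    have hKm : (2*(a:ℤ)*q + rn)%2 = 0 := by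
      rw [show 2*(a:ℤ)*q + (rn:ℤ) = 2*(2*(a:ℤ)*s+a+c) by rw [hs, hcz]; ring]; exact zmod2 _
    have hcle : c ≤ a-1 := by omega
    have hrr : (rn:ℝ) = 2*(c:ℝ) := by exact_mod_cast hcz
    have hsum : ∑ i ∈ Finset.range (a-1), 2 * max (2*(a:ℝ)*AA u + (2*(i:ℝ)+2)) (2*(a:ℝ)*BB u)
        = ∑ i ∈ Finset.range (a-1),
            2 * max ((2*(a:ℝ)*BB u) + ((2*(i:ℝ)+2) - (2*(a:ℝ) - 2*(a:ℝ)*θ))) (2*(a:ℝ)*BB u) :=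
      Finset.sum_congr rfl (fun i _ => by rw [show 2*(a:ℝ)*AA u + (2*(i:ℝ)+2)
        = (2*(a:ℝ)*BB u) + ((2*(i:ℝ)+2) - (2*(a:ℝ) - 2*(a:ℝ)*θ)) by rw [hAA, hBB]; ring])
    have hsub : ((a-1-c : ℕ):ℝ) = (a:ℝ) - 1 - c := by
      rw [Nat.cast_sub hcle, hsa]
    rw [hL, hsum, sum_cut (a-1) (a-1-c) (Nat.sub_le (a-1) c) (2*(a:ℝ) - 2*(a:ℝ)*θ) _ 2
      (fun i hi => by
        have h' : (i:ℝ)+1 ≤ ((a-1-c:ℕ):ℝ) := by exact_mod_cast hi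
        rw [hsub] at h'
        linarith)
      (fun i hci _ => by
        have h' : ((a-1-c:ℕ):ℝ) ≤ i := by exact_mod_cast hci
        rw [hsub] at h'
        linarith)]
    rw [hKd, hKm, hAA, hBB, hu, hsa, hsub]
    have hqr : (q:ℝ) = 2*(s:ℝ)+1 := by exact_mod_cast hs
    push_cast
    rw [hqr, hrr]
    ring
  · -- q = 2s+1, rn = 2c+1
    have hcz : (rn:ℤ) = 2*(c:ℤ)+1 := by exact_mod_cast hc
    have hqd : q^2/2 = 2*s^2+2*s := by
      rw [show q^2 = 2*(2*s^2+2*s)+1 by rw [hs]; ring, zdiv2']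
    have hqd1 : (q^2+1)/2 = 2*s^2+2*s+1 := by
      rw [show q^2+1 = 2*(2*s^2+2*s+1) by rw [hs]; ring, zdiv2]
    have hqm : q%2 = 1 := by omega
    have hAA : AA u = (2*(s:ℝ)^2+2*(s:ℝ)) + (2*(s:ℝ)+2)*θ := by
      simp only [AA, ← hqdef, ← hθdef, hqd, hqm]
      push_cast [hs]; ring
    have hBB : BB u = (2*(s:ℝ)^2+2*(s:ℝ)+1) + (2*(s:ℝ)+1)*θ := by
      simp only [BB, ← hqdef, ← hθdef, hqd1, hqm]
      push_cast [hs]; ring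
    have hKd : ((2*(a:ℤ)*q + rn)^2+1)/2 = 2*(2*(a:ℤ)*s+a+c)^2 + 2*(2*(a:ℤ)*s+a+c) + 1 := by
      rw [show (2*(a:ℤ)*q + rn)^2+1
        = 2*(2*(2*(a:ℤ)*s+a+c)^2 + 2*(2*(a:ℤ)*s+a+c) + 1) by rw [hs, hcz]; ring, zdiv2]
    have hKm : (2*(a:ℤ)*q + rn)%2 = 1 := by
      rw [show 2*(a:ℤ)*q + (rn:ℤ) = 2*(2*(a:ℤ)*s+a+c)+1 by rw [hs, hcz]; ring]; exact zmod2' _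
    have hcle : c ≤ a-1 := by omega
    have hrr : (rn:ℝ) = 2*(c:ℝ)+1 := by exact_mod_cast hcz
    have hsum : ∑ i ∈ Finset.range (a-1), 2 * max (2*(a:ℝ)*AA u + (2*(i:ℝ)+2)) (2*(a:ℝ)*BB u)
        = ∑ i ∈ Finset.range (a-1),
            2 * max ((2*(a:ℝ)*BB u) + ((2*(i:ℝ)+2) - (2*(a:ℝ) - 2*(a:ℝ)*θ))) (2*(a:ℝ)*BB u) :=
      Finset.sum_congr rfl (fun i _ => by rw [show 2*(a:ℝ)*AA u + (2*(i:ℝ)+2)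
        = (2*(a:ℝ)*BB u) + ((2*(i:ℝ)+2) - (2*(a:ℝ) - 2*(a:ℝ)*θ)) by rw [hAA, hBB]; ring])
    have hsub : ((a-1-c : ℕ):ℝ) = (a:ℝ) - 1 - c := by
      rw [Nat.cast_sub hcle, hsa]
    rw [hL, hsum, sum_cut (a-1) (a-1-c) (Nat.sub_le (a-1) c) (2*(a:ℝ) - 2*(a:ℝ)*θ) _ 2
      (fun i hi => by
        have h' : (i:ℝ)+1 ≤ ((a-1-c:ℕ):ℝ) := by exact_mod_cast hi
        rw [hsub] at h'
        linarith)
      (fun i hci _ => by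
        have h' : ((a-1-c:ℕ):ℝ) ≤ i := by exact_mod_cast hci
        rw [hsub] at h'
        linarith)]
    rw [hKd, hKm, hAA, hBB, hu, hsa, hsub]
    have hqr : (q:ℝ) = 2*(s:ℝ)+1 := by exact_mod_cast hs
    push_cast
    rw [hqr, hrr]
    ring

/-- Hidden states of a maxout HyCNN with input dimension `1`.
Layer widths are `w ℓ` (with `z_0 = 0 ∈ ℝ^{w 0}`), hidden-to-hidden matrices `V1 ℓ, V2 ℓ`,
skip weights `W1 ℓ, W2 ℓ` and biases `b1 ℓ, b2 ℓ`; the activation is the entrywise maximum of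
the two gates. -/
noncomputable def hycnnHidden1 (w : ℕ → ℕ)
    (V1 V2 : (ℓ : ℕ) → Matrix (Fin (w (ℓ + 1))) (Fin (w ℓ)) ℝ)
    (W1 W2 b1 b2 : (ℓ : ℕ) → Fin (w (ℓ + 1)) → ℝ) :
    (ℓ : ℕ) → ℝ → Fin (w ℓ) → ℝ
  | 0, _ => 0
  | ℓ + 1, x => fun i =>
      max ((V1 ℓ).mulVec (hycnnHidden1 w V1 V2 W1 W2 b1 b2 ℓ x) i + W1 ℓ i * x + b1 ℓ i)
          ((V2 ℓ).mulVec (hycnnHidden1 w V1 V2 W1 W2 b1 b2 ℓ x) i + W2 ℓ i * x + b2 ℓ i)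

-- weight patterns
noncomputable def pphi (k : ℕ) : Fin k → ℝ := fun i => if Odd (i:ℕ) then 2 else 0
noncomputable def ppsi (k : ℕ) : Fin k → ℝ :=
  fun i => if (i:ℕ) = 0 then 1 else if Odd (i:ℕ) then 0 else 2

noncomputable def Pr (w : ℕ → ℕ) (ℓ : ℕ) : ℝ := ∏ j ∈ Finset.Icc 1 ℓ, (w j : ℝ)

noncomputable def spsiF (ℓ : ℕ) : ℝ := if ℓ = 0 then 1 else 0
noncomputable def tphiF (w : ℕ → ℕ) (ℓ : ℕ) : ℝ :=
  if ℓ = 0 then 0 else -(1/(2 * (Pr w (ℓ-1))^2))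
noncomputable def tpsiF (w : ℕ → ℕ) (ℓ : ℕ) : ℝ :=
  if ℓ = 0 then 0 else -(((w ℓ : ℝ) - 2)/(2 * (w ℓ) * (Pr w (ℓ-1))^2))

noncomputable def cV1 (w : ℕ → ℕ) (ℓ : ℕ) : Matrix (Fin (w (ℓ+1))) (Fin (w ℓ)) ℝ :=
  fun j i => (1/(w (ℓ+1) : ℝ)) *
    (if (j:ℕ) = 0 then pphi (w ℓ) i + ppsi (w ℓ) i else pphi (w ℓ) i)
noncomputable def cV2 (w : ℕ → ℕ) (ℓ : ℕ) : Matrix (Fin (w (ℓ+1))) (Fin (w ℓ)) ℝ :=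
  fun j i => (1/(w (ℓ+1) : ℝ)) *
    (if (j:ℕ) = 0 then pphi (w ℓ) i + ppsi (w ℓ) i else ppsi (w ℓ) i)
noncomputable def cW1 (w : ℕ → ℕ) (ℓ : ℕ) : Fin (w (ℓ+1)) → ℝ :=
  fun j => if (j:ℕ) = 0 then (1/(w (ℓ+1) : ℝ)) * spsiF ℓ else 0
noncomputable def cW2 (w : ℕ → ℕ) (ℓ : ℕ) : Fin (w (ℓ+1)) → ℝ :=
  fun _ => (1/(w (ℓ+1) : ℝ)) * spsiF ℓ
noncomputable def cb1 (w : ℕ → ℕ) (ℓ : ℕ) : Fin (w (ℓ+1)) → ℝ :=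
  fun j => if (j:ℕ) = 0 then (1/(w (ℓ+1) : ℝ)) * (tphiF w ℓ + tpsiF w ℓ)
    else (1/(w (ℓ+1) : ℝ)) * tphiF w ℓ + (j:ℕ)/(Pr w (ℓ+1))^2
noncomputable def cb2 (w : ℕ → ℕ) (ℓ : ℕ) : Fin (w (ℓ+1)) → ℝ :=
  fun j => if (j:ℕ) = 0 then (1/(w (ℓ+1) : ℝ)) * (tphiF w ℓ + tpsiF w ℓ)
    else (1/(w (ℓ+1) : ℝ)) * tpsiF w ℓ

lemma wsum_odd (a : ℕ) (f : ℕ → ℝ) :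
    ∑ k ∈ Finset.range (2*a), (if Odd k then (2:ℝ) else 0) * f k
      = ∑ i ∈ Finset.range a, 2 * f (2*i+1) := by
  induction a with
  | zero => simp
  | succ a ih =>
    rw [show 2*(a+1) = (2*a+1)+1 by ring, Finset.sum_range_succ, Finset.sum_range_succ,
      Finset.sum_range_succ, ih]
    have h1 : ¬ Odd (2*a) := by simp [Nat.odd_iff]
    have h2 : Odd (2*a+1) := by simp [Nat.odd_iff]
    rw [if_neg h1, if_pos h2]
    ring
lemma wsum_psi (a : ℕ) (f : ℕ → ℝ) :
    ∑ k ∈ Finset.range (2*a+2), (if k = 0 then (1:ℝ) else if Odd k then 0 else 2) * f k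
      = f 0 + ∑ i ∈ Finset.range a, 2 * f (2*i+2) := by
  induction a with
  | zero =>
    rw [show 2*0+2 = 2 by ring]
    rw [Finset.sum_range_succ, Finset.sum_range_succ]
    norm_num
  | succ a ih =>
    rw [show 2*(a+1)+2 = (2*a+2)+1+1 by ring, Finset.sum_range_succ, Finset.sum_range_succ,
      ih, Finset.sum_range_succ]
    have h1 : Odd (2*a+2+1) := by simp [Nat.odd_iff, Nat.add_mod]
    have h2 : ¬ Odd (2*a+2) := by simp [Nat.odd_iff, Nat.add_mod]
    rw [if_neg (by omega : ¬ (2*a+2 = 0)), if_neg (by omega : ¬ (2*a+2+1 = 0)),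
      if_pos h1, if_neg h2]
    ring

lemma AA_unit {x : ℝ} (h0 : 0 ≤ x) (h1 : x ≤ 1) : AA x = 0 := by
  rcases eq_or_lt_of_le h1 with h | h
  · subst h; norm_num [AA]
  · have : ⌊x⌋ = 0 := Int.floor_eq_zero_iff.2 ⟨h0, h⟩
    norm_num [AA, this]
lemma BB_unit {x : ℝ} (h0 : 0 ≤ x) (h1 : x ≤ 1) : BB x = x := by
  rcases eq_or_lt_of_le h1 with h | h
  · subst h; norm_num [BB]
  · have : ⌊x⌋ = 0 := Int.floor_eq_zero_iff.2 ⟨h0, h⟩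
    norm_num [BB, this]

lemma Pr_pos (w : ℕ → ℕ) (L : ℕ) (hw_pos : ∀ ℓ, 1 ≤ ℓ → ℓ ≤ L → 0 < w ℓ)
    (ℓ : ℕ) (hℓ : ℓ ≤ L) : 0 < Pr w ℓ := by
  refine Finset.prod_pos fun j hj => ?_
  simp only [Finset.mem_Icc] at hj
  exact_mod_cast hw_pos j hj.1 (le_trans hj.2 hℓ)

lemma invariant (w : ℕ → ℕ) (L : ℕ)
    (hw_even : ∀ ℓ, 1 ≤ ℓ → ℓ ≤ L → Even (w ℓ))
    (hw_pos : ∀ ℓ, 1 ≤ ℓ → ℓ ≤ L → 0 < w ℓ) :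
    ∀ ℓ, ℓ ≤ L → ∀ x ∈ Set.Icc (0:ℝ) 1,
      ((∑ i, pphi (w ℓ) i *
          hycnnHidden1 w (cV1 w) (cV2 w) (cW1 w) (cW2 w) (cb1 w) (cb2 w) ℓ x i)
        + tphiF w ℓ = AA (Pr w ℓ * x) / (Pr w ℓ)^2) ∧
      ((∑ i, ppsi (w ℓ) i *
          hycnnHidden1 w (cV1 w) (cV2 w) (cW1 w) (cW2 w) (cb1 w) (cb2 w) ℓ x i)
        + spsiF ℓ * x + tpsiF w ℓ = BB (Pr w ℓ * x) / (Pr w ℓ)^2) := by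
  intro ℓ
  induction ℓ with
  | zero =>
    intro _ x hx
    obtain ⟨hx0, hx1⟩ := hx
    have hP : Pr w 0 = 1 := by simp [Pr]
    constructor
    · simp [hycnnHidden1, tphiF, hP, AA_unit hx0 hx1]
    · simp [hycnnHidden1, spsiF, tpsiF, hP, BB_unit hx0 hx1]
  | succ ℓ ih =>
    intro hℓL x hx
    have hℓ' : ℓ ≤ L := Nat.le_of_succ_le hℓL
    obtain ⟨hΦ, hΨ⟩ := ih hℓ' x hx
    have hnpos : 0 < w (ℓ+1) := hw_pos (ℓ+1) (by omega) hℓL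
    obtain ⟨a0, hae⟩ := hw_even (ℓ+1) (by omega) hℓL
    have hna : w (ℓ+1) = 2*a0 := by omega
    have ha1 : 1 ≤ a0 := by omega
    have hnar : ((w (ℓ+1) : ℕ):ℝ) = 2*(a0:ℝ) := by exact_mod_cast congrArg (Nat.cast : ℕ → ℝ) hna
    have hPlpos : 0 < Pr w ℓ := Pr_pos w L hw_pos ℓ hℓ'
    have hPlne : Pr w ℓ ≠ 0 := ne_of_gt hPlpos
    have ha0ne : (a0:ℝ) ≠ 0 := by positivity
    have hPsucc : Pr w (ℓ+1) = Pr w ℓ * w (ℓ+1) := by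
      rw [Pr, Pr, Finset.prod_Icc_succ_top (by omega : 1 ≤ ℓ+1)]
    set Z := hycnnHidden1 w (cV1 w) (cV2 w) (cW1 w) (cW2 w) (cb1 w) (cb2 w) with hZ
    set u := Pr w ℓ * x with hudef
    set Φ := AA u / (Pr w ℓ)^2 with hΦdef
    set Ψ := BB u / (Pr w ℓ)^2 with hΨdef
    have hΦs : ∑ i, pphi (w ℓ) i * Z ℓ x i = Φ - tphiF w ℓ := by
      rw [← hΦ]; ring
    have hΨs : ∑ i, ppsi (w ℓ) i * Z ℓ x i = Ψ - spsiF ℓ * x - tpsiF w ℓ := by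
      rw [← hΨ]; ring
    have hpull : ∀ (g v : Fin (w ℓ) → ℝ),
        ∑ i, ((1/(w (ℓ+1):ℝ)) * g i) * v i = (1/(w (ℓ+1):ℝ)) * ∑ i, g i * v i := by
      intro g v
      rw [Finset.mul_sum]
      exact Finset.sum_congr rfl fun i _ => by ring
    have hzeq : ∀ j : Fin (w (ℓ+1)), Z (ℓ+1) x j =
        max ((cV1 w ℓ).mulVec (Z ℓ x) j + cW1 w ℓ j * x + cb1 w ℓ j)
            ((cV2 w ℓ).mulVec (Z ℓ x) j + cW2 w ℓ j * x + cb2 w ℓ j) := by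
      intro j; rw [hZ]; rfl
    have hzj : ∀ j : Fin (w (ℓ+1)), (j:ℕ) ≠ 0 →
        Z (ℓ+1) x j = max ((1/(w (ℓ+1):ℝ))*Φ + ((j:ℕ):ℝ)/(Pr w (ℓ+1))^2)
          ((1/(w (ℓ+1):ℝ))*Ψ) := by
      intro j hj
      rw [hzeq j]
      have hg1 : (cV1 w ℓ).mulVec (Z ℓ x) j + cW1 w ℓ j * x + cb1 w ℓ j
          = (1/(w (ℓ+1):ℝ))*Φ + ((j:ℕ):ℝ)/(Pr w (ℓ+1))^2 := by
        simp only [Matrix.mulVec, dotProduct, cV1, cW1, cb1, if_neg hj]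
        rw [hpull, hΦs]; ring
      have hg2 : (cV2 w ℓ).mulVec (Z ℓ x) j + cW2 w ℓ j * x + cb2 w ℓ j
          = (1/(w (ℓ+1):ℝ))*Ψ := by
        simp only [Matrix.mulVec, dotProduct, cV2, cW2, cb2, if_neg hj]
        rw [hpull, hΨs]; ring
      rw [hg1, hg2]
    have hz0 : ∀ j : Fin (w (ℓ+1)), (j:ℕ) = 0 →
        Z (ℓ+1) x j = (1/(w (ℓ+1):ℝ))*(Φ+Ψ) := by
      intro j hj
      rw [hzeq j]
      have hg1 : (cV1 w ℓ).mulVec (Z ℓ x) j + cW1 w ℓ j * x + cb1 w ℓ j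
          = (1/(w (ℓ+1):ℝ))*(Φ+Ψ) := by
        simp only [Matrix.mulVec, dotProduct, cV1, cW1, cb1, if_pos hj]
        have : ∀ i, (1/(w (ℓ+1):ℝ)) * (pphi (w ℓ) i + ppsi (w ℓ) i) * Z ℓ x i
            = (1/(w (ℓ+1):ℝ)) * pphi (w ℓ) i * Z ℓ x i
              + (1/(w (ℓ+1):ℝ)) * ppsi (w ℓ) i * Z ℓ x i := fun i => by ring
        rw [Finset.sum_congr rfl (fun i _ => this i), Finset.sum_add_distrib]
        rw [hpull, hpull, hΦs, hΨs]; ring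
      have hg2 : (cV2 w ℓ).mulVec (Z ℓ x) j + cW2 w ℓ j * x + cb2 w ℓ j
          = (1/(w (ℓ+1):ℝ))*(Φ+Ψ) := by
        simp only [Matrix.mulVec, dotProduct, cV2, cW2, cb2, if_pos hj]
        have : ∀ i, (1/(w (ℓ+1):ℝ)) * (pphi (w ℓ) i + ppsi (w ℓ) i) * Z ℓ x i
            = (1/(w (ℓ+1):ℝ)) * pphi (w ℓ) i * Z ℓ x i
              + (1/(w (ℓ+1):ℝ)) * ppsi (w ℓ) i * Z ℓ x i := fun i => by ring
        rw [Finset.sum_congr rfl (fun i _ => this i), Finset.sum_add_distrib]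
        rw [hpull, hpull, hΦs, hΨs]; ring
      rw [hg1, hg2, max_self]
    set F : ℕ → ℝ := fun k =>
      max ((1/(w (ℓ+1):ℝ))*Φ + (k:ℝ)/(Pr w (ℓ+1))^2) ((1/(w (ℓ+1):ℝ))*Ψ) with hFdef
    have hPx : Pr w (ℓ+1) * x = 2*(a0:ℝ)*u := by
      rw [hPsucc, hudef, hnar]; ring
    have hPsq : (Pr w (ℓ+1))^2 = (2*(a0:ℝ))^2 * (Pr w ℓ)^2 := by
      rw [hPsucc, hnar]; ring
    have hterm : ∀ i : ℕ, F (i) = (max (2*(a0:ℝ)*AA u + ((i:ℕ):ℝ)) (2*(a0:ℝ)*BB u))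
        / ((2*(a0:ℝ))^2 * (Pr w ℓ)^2) := by
      intro i
      simp only [hFdef]
      have h1 : (1/(w (ℓ+1):ℝ))*Φ + ((i:ℕ):ℝ)/(Pr w (ℓ+1))^2
          = (2*(a0:ℝ)*AA u + ((i:ℕ):ℝ)) / ((2*(a0:ℝ))^2 * (Pr w ℓ)^2) := by
        rw [hΦdef, hPsq, hnar]
        field_simp
      have h2 : (1/(w (ℓ+1):ℝ))*Ψ
          = (2*(a0:ℝ)*BB u) / ((2*(a0:ℝ))^2 * (Pr w ℓ)^2) := by
        rw [hΨdef, hnar]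
        field_simp
      rw [h1, h2, max_div_div_right (by positivity : (0:ℝ) ≤ (2*(a0:ℝ))^2 * (Pr w ℓ)^2)]
    constructor
    · -- Φ side
      have hstep1 : ∑ j, pphi (w (ℓ+1)) j * Z (ℓ+1) x j
          = ∑ k ∈ Finset.range (w (ℓ+1)), (if Odd k then (2:ℝ) else 0) * F k := by
        rw [← Fin.sum_univ_eq_sum_range (fun k => (if Odd k then (2:ℝ) else 0) * F k) (w (ℓ+1))]
        refine Finset.sum_congr rfl fun j _ => ?_
        by_cases hj : (j:ℕ) = 0
        · simp [pphi, hj]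
        · by_cases hodd : Odd (j:ℕ)
          · simp only [pphi, if_pos hodd, hFdef]
            rw [hzj j hj]
          · simp only [pphi, if_neg hodd]
            ring
      rw [hstep1, hna, wsum_odd a0 F]
      have hsA : ∑ i ∈ Finset.range a0,
          2 * max (2*(a0:ℝ)*AA u + (2*(i:ℝ)+1)) (2*(a0:ℝ)*BB u)
            = AA (2*(a0:ℝ)*u) + 2*(a0:ℝ)^2 := by
        have := starA a0 ha1 u; linarith
      have hconv : ∑ i ∈ Finset.range a0, 2 * F (2*i+1)
          = (∑ i ∈ Finset.range a0,
              2 * max (2*(a0:ℝ)*AA u + (2*(i:ℝ)+1)) (2*(a0:ℝ)*BB u))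
            / ((2*(a0:ℝ))^2 * (Pr w ℓ)^2) := by
        rw [Finset.sum_div]
        refine Finset.sum_congr rfl fun i _ => ?_
        rw [hterm (2*i+1)]
        push_cast
        ring
      rw [hconv, hsA]
      have htp : tphiF w (ℓ+1) = -(1/(2 * (Pr w ℓ)^2)) := by
        simp [tphiF]
      rw [htp, hPx, hPsq]
      field_simp
      ring
    · -- Ψ side
      obtain ⟨a', ha'⟩ : ∃ a', a0 = a'+1 := ⟨a0-1, by omega⟩
      set G : ℕ → ℝ := fun k => if k = 0 then (1/(w (ℓ+1):ℝ))*(Φ+Ψ) else F k with hGdef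
      have hstep1 : ∑ j, ppsi (w (ℓ+1)) j * Z (ℓ+1) x j
          = ∑ k ∈ Finset.range (w (ℓ+1)),
              (if k = 0 then (1:ℝ) else if Odd k then 0 else 2) * G k := by
        rw [← Fin.sum_univ_eq_sum_range
          (fun k => (if k = 0 then (1:ℝ) else if Odd k then 0 else 2) * G k) (w (ℓ+1))]
        refine Finset.sum_congr rfl fun j _ => ?_
        by_cases hj : (j:ℕ) = 0
        · simp only [ppsi, hGdef, if_pos hj]
          rw [hz0 j hj]
        · by_cases hodd : Odd (j:ℕ)
          · simp only [ppsi, hGdef, if_neg hj, if_pos hodd]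
            ring
          · simp only [ppsi, hGdef, hFdef, if_neg hj, if_neg hodd]
            rw [hzj j hj]
      rw [hstep1, hna, ha', show 2*(a'+1) = 2*a'+2 by ring, wsum_psi a' G]
      have hG0 : G 0 = (1/(w (ℓ+1):ℝ))*(Φ+Ψ) := by simp [hGdef]
      have hGe : ∀ i : ℕ, G (2*i+2) = F (2*i+2) := fun i => by
        simp [hGdef]
      have hsB : ∑ i ∈ Finset.range a',
          2 * max (2*(a0:ℝ)*AA u + (2*(i:ℝ)+2)) (2*(a0:ℝ)*BB u)
            = BB (2*(a0:ℝ)*u) - 2*(a0:ℝ)*(AA u + BB u) + 2*(a0:ℝ)*((a0:ℝ)-1) := by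
        have h := starB a0 ha1 u
        rw [show a0 - 1 = a' by omega] at h
        linarith
      have hconv : ∑ i ∈ Finset.range a', 2 * G (2*i+2)
          = (∑ i ∈ Finset.range a',
              2 * max (2*(a0:ℝ)*AA u + (2*(i:ℝ)+2)) (2*(a0:ℝ)*BB u))
            / ((2*(a0:ℝ))^2 * (Pr w ℓ)^2) := by
        rw [Finset.sum_div]
        refine Finset.sum_congr rfl fun i _ => ?_
        rw [hGe i, hterm (2*i+2)]
        push_cast
        ring
      rw [hconv, hsB, hG0]
      have htp : tpsiF w (ℓ+1) = -(((w (ℓ+1) : ℝ) - 2)/(2 * (w (ℓ+1)) * (Pr w ℓ)^2)) := by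
        simp [tpsiF]
      have hsp : spsiF (ℓ+1) = 0 := by simp [spsiF]
      rw [htp, hsp, hPx, hPsq, hΦdef, hΨdef, hnar]
      field_simp
      ring

lemma pphi_nonneg (k : ℕ) (i : Fin k) : 0 ≤ pphi k i := by
  unfold pphi; split_ifs <;> norm_num
lemma ppsi_nonneg (k : ℕ) (i : Fin k) : 0 ≤ ppsi k i := by
  unfold ppsi; split_ifs <;> norm_num

lemma AB_sq (v : ℝ) : AA v + BB v - v^2
    = (v - ⌊v⌋) - (v - ⌊v⌋)^2 := by
  have hm : ∀ (m:ℤ), m/2 + (m+1)/2 = m := fun m => by omega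
  have hd := hm (⌊v⌋^2)
  simp only [AA, BB]
  have h1 : ((⌊v⌋^2/2 : ℤ):ℝ) + (((⌊v⌋^2+1)/2 : ℤ):ℝ) = ((⌊v⌋:ℝ))^2 := by
    exact_mod_cast congrArg (Int.cast : ℤ → ℝ) hd
  have h2 : ((⌊v⌋ + ⌊v⌋%2 : ℤ):ℝ) + ((⌊v⌋ + 1 - ⌊v⌋%2 : ℤ):ℝ) = 2*((⌊v⌋:ℝ)) + 1 := by
    push_cast; ring
  linear_combination h1 + (v - (⌊v⌋:ℝ)) * h2

/-- For any `L ≥ 1` and even positive layer widths `d_1, …, d_L = w 1, …, w L`,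
there is a maxout HyCNN `h : ℝ → ℝ` (hidden-to-hidden and output weights non-negative) with `L`
hidden layers and `w ℓ` neurons in layer `ℓ` such that
`sup_{x ∈ [0,1]} |h(x) − x²| ≤ 1/(8 ∏_{ℓ=1}^L (w ℓ)²)`. -/
theorem hycnn_quadratic_approx (L : ℕ) (hL : 1 ≤ L) (w : ℕ → ℕ)
    (hw_even : ∀ ℓ, 1 ≤ ℓ → ℓ ≤ L → Even (w ℓ))
    (hw_pos : ∀ ℓ, 1 ≤ ℓ → ℓ ≤ L → 0 < w ℓ) :
    ∃ (V1 V2 : (ℓ : ℕ) → Matrix (Fin (w (ℓ + 1))) (Fin (w ℓ)) ℝ)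
      (W1 W2 b1 b2 : (ℓ : ℕ) → Fin (w (ℓ + 1)) → ℝ)
      (VL : Fin (w L) → ℝ) (WL bL : ℝ),
      (∀ ℓ, ℓ < L → ∀ i j, 0 ≤ V1 ℓ i j) ∧
      (∀ ℓ, ℓ < L → ∀ i j, 0 ≤ V2 ℓ i j) ∧
      (∀ i, 0 ≤ VL i) ∧
      ∀ x ∈ Set.Icc (0 : ℝ) 1,
        |(∑ i, VL i * hycnnHidden1 w V1 V2 W1 W2 b1 b2 L x i) + WL * x + bL - x ^ 2|
          ≤ 1 / (8 * ∏ ℓ ∈ Finset.Icc 1 L, (w ℓ : ℝ) ^ 2) := by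
  refine ⟨cV1 w, cV2 w, cW1 w, cW2 w, cb1 w, cb2 w,
    (fun i => pphi (w L) i + ppsi (w L) i), spsiF L,
    tphiF w L + tpsiF w L - 1/(8*(Pr w L)^2), ?_, ?_, ?_, ?_⟩
  · intro ℓ _ i j
    unfold cV1
    split_ifs
    · exact mul_nonneg (by positivity) (add_nonneg (pphi_nonneg _ _) (ppsi_nonneg _ _))
    · exact mul_nonneg (by positivity) (pphi_nonneg _ _)
  · intro ℓ _ i j
    unfold cV2
    split_ifs
    · exact mul_nonneg (by positivity) (add_nonneg (pphi_nonneg _ _) (ppsi_nonneg _ _))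
    · exact mul_nonneg (by positivity) (ppsi_nonneg _ _)
  · exact fun i => add_nonneg (pphi_nonneg _ _) (ppsi_nonneg _ _)
  · intro x hx
    obtain ⟨h1, h2⟩ := invariant w L hw_even hw_pos L le_rfl x hx
    have hPpos : 0 < Pr w L := Pr_pos w L hw_pos L le_rfl
    have hPne : Pr w L ≠ 0 := ne_of_gt hPpos
    have hsplit : ∑ i, (pphi (w L) i + ppsi (w L) i) *
          hycnnHidden1 w (cV1 w) (cV2 w) (cW1 w) (cW2 w) (cb1 w) (cb2 w) L x i
        = (∑ i, pphi (w L) i *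
            hycnnHidden1 w (cV1 w) (cV2 w) (cW1 w) (cW2 w) (cb1 w) (cb2 w) L x i)
          + ∑ i, ppsi (w L) i *
            hycnnHidden1 w (cV1 w) (cV2 w) (cW1 w) (cW2 w) (cb1 w) (cb2 w) L x i := by
      rw [← Finset.sum_add_distrib]
      exact Finset.sum_congr rfl fun i _ => by ring
    set v := Pr w L * x with hvdef
    have hexpr : (∑ i, (pphi (w L) i + ppsi (w L) i) *
          hycnnHidden1 w (cV1 w) (cV2 w) (cW1 w) (cW2 w) (cb1 w) (cb2 w) L x i)
        + spsiF L * x + (tphiF w L + tpsiF w L - 1/(8*(Pr w L)^2)) - x^2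
        = ((AA v + BB v - v^2) - 1/8) / (Pr w L)^2 := by
      rw [hsplit]
      have hx2 : x^2 = v^2/(Pr w L)^2 := by
        rw [hvdef]; field_simp
      rw [show (∑ i, pphi (w L) i *
            hycnnHidden1 w (cV1 w) (cV2 w) (cW1 w) (cW2 w) (cb1 w) (cb2 w) L x i)
          + ∑ i, ppsi (w L) i *
            hycnnHidden1 w (cV1 w) (cV2 w) (cW1 w) (cW2 w) (cb1 w) (cb2 w) L x i
          + spsiF L * x + (tphiF w L + tpsiF w L - 1/(8*(Pr w L)^2))
          = ((∑ i, pphi (w L) i *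
              hycnnHidden1 w (cV1 w) (cV2 w) (cW1 w) (cW2 w) (cb1 w) (cb2 w) L x i)
            + tphiF w L)
            + ((∑ i, ppsi (w L) i *
              hycnnHidden1 w (cV1 w) (cV2 w) (cW1 w) (cW2 w) (cb1 w) (cb2 w) L x i)
            + spsiF L * x + tpsiF w L) - 1/(8*(Pr w L)^2) by ring, h1, h2, hx2]
      field_simp
      ring
    have hq1 : (⌊v⌋:ℝ) ≤ v := Int.floor_le v
    have hq2 : v < ⌊v⌋ + 1 := Int.lt_floor_add_one v
    have hE := AB_sq v
    have hE0 : 0 ≤ AA v + BB v - v^2 := by nlinarith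
    have hE4 : AA v + BB v - v^2 ≤ 1/4 := by nlinarith [sq_nonneg (v - ⌊v⌋ - 1/2)]
    have habs : |(AA v + BB v - v^2) - 1/8| ≤ 1/8 := by
      rw [abs_le]; constructor <;> linarith
    have hRHS : 1/(8 * ∏ ℓ ∈ Finset.Icc 1 L, (w ℓ : ℝ)^2) = (1/8)/(Pr w L)^2 := by
      rw [show ∏ ℓ ∈ Finset.Icc 1 L, (w ℓ : ℝ)^2 = (Pr w L)^2 by
        rw [Pr, Finset.prod_pow]]
      field_simp
    rw [hexpr, hRHS, abs_div, abs_of_pos (by positivity : (0:ℝ) < (Pr w L)^2)]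
    gcongr
end

section
/- Fix positive integers D and d with d ≥ 2, an integer j with 1 ≤ j ≤ d − 1, and real numbers a ≥ b ≥ 0; set Δ = a − b. Define φ(x) = ∑_{k=1}^{D−1} (a·𝟙[k odd] + b·𝟙[k even]) (x − k/D)_+ and ψ(x) = ∑_{k=1}^{D−1} (b·𝟙[k odd] + a·𝟙[k even]) (x − k/D)_+. Then for every x ∈ [0,1], max( φ(x), ψ(x) + (Δ/2)·x − Δ·j/(2·D·d) ) = ∑_{k=1}^{D−1} b·(x − k/D)_+ + ∑_{k=0}^{D−1} (Δ/2)·( 𝟙[k even]·(x − k/D − j/(D·d))_+ + 𝟙[k odd]·(x − k/D − (d − j)/(D·d))_+ ). -/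
open Finset
lemma keyE1 (D d j : ℕ) (hD : (D:ℝ) ≠ 0) (hd : (d:ℝ) ≠ 0) (a b x : ℝ) (m : ℕ) :
    ∑ k ∈ Ico 1 (m+1), (if Odd k then a else b) * (x - (k:ℝ)/D)
      = (∑ k ∈ Ico 1 (m+1), b * (x - (k:ℝ)/D))
        + (∑ k ∈ range m, (a-b)/2 *
            (x - (k:ℝ)/D - (if Even k then (j:ℝ)/((D:ℝ)*d) else ((d:ℝ)-j)/((D:ℝ)*d))))
        + (if Even m then 0 else (a-b)/2 * (x - (m:ℝ)/D - ((d:ℝ)-j)/((D:ℝ)*d))) := by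
  induction m with
  | zero => simp
  | succ n ih =>
    rw [Finset.sum_Ico_succ_top (f := fun k => (if Odd k then a else b) * (x - (k:ℝ)/D))
        (by omega),
      Finset.sum_Ico_succ_top (f := fun k => b * (x - (k:ℝ)/D)) (by omega),
      Finset.sum_range_succ]
    rcases Nat.even_or_odd n with he | ho
    · simp only [Nat.odd_add_one, Nat.even_add_one, he, Nat.not_odd_iff_even.mpr he,
        if_pos, if_neg, not_true, if_false, ite_true, ite_false, not_false_eq_true, not_not]
      rw [ih]
      simp only [he, ite_true, Nat.not_odd_iff_even.mpr he, ite_false]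
      push_cast
      have key : (j:ℝ)/((D:ℝ)*d) + ((d:ℝ)-j)/((D:ℝ)*d) = 1/(D:ℝ) := by
        field_simp; ring
      linear_combination (a-b)/2 * key
    · simp only [Nat.odd_add_one, Nat.even_add_one, ho, Nat.not_even_iff_odd.mpr ho,
        if_pos, if_neg, not_true, if_false, ite_true, ite_false, not_false_eq_true, not_false_iff]
      rw [ih]
      simp only [ho, Nat.not_even_iff_odd.mpr ho, ite_true, ite_false]
      push_cast
      ring

lemma keyE2 (D d j : ℕ) (hD : (D:ℝ) ≠ 0) (hd : (d:ℝ) ≠ 0) (a b x : ℝ) (m : ℕ) :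
    (∑ k ∈ Ico 1 (m+1), (if Odd k then b else a) * (x - (k:ℝ)/D))
        + (a - b) / 2 * x - (a - b) * (j:ℝ) / (2 * (D:ℝ) * (d:ℝ))
      = (∑ k ∈ Ico 1 (m+1), b * (x - (k:ℝ)/D))
        + (∑ k ∈ range m, (a-b)/2 *
            (x - (k:ℝ)/D - (if Even k then (j:ℝ)/((D:ℝ)*d) else ((d:ℝ)-j)/((D:ℝ)*d))))
        + (if Even m then (a-b)/2 * (x - (m:ℝ)/D - (j:ℝ)/((D:ℝ)*d)) else 0) := by
  induction m with
  | zero =>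
    simp only [Ico_self, sum_empty, range_zero, zero_add, Nat.cast_zero, Even.zero, if_pos,
      ite_true]
    field_simp
    ring
  | succ n ih =>
    rw [Finset.sum_Ico_succ_top (f := fun k => (if Odd k then b else a) * (x - (k:ℝ)/D))
        (by omega),
      Finset.sum_Ico_succ_top (f := fun k => b * (x - (k:ℝ)/D)) (by omega),
      Finset.sum_range_succ]
    rcases Nat.even_or_odd n with he | ho
    · simp only [Nat.odd_add_one, Nat.even_add_one, he, Nat.not_odd_iff_even.mpr he,
        if_pos, if_neg, not_true, if_false, ite_true, ite_false, not_false_eq_true, not_not]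
      rw [if_pos he] at ih
      push_cast
      linear_combination ih
    · simp only [Nat.odd_add_one, Nat.even_add_one, ho, Nat.not_even_iff_odd.mpr ho,
        if_pos, if_neg, not_true, if_false, ite_true, ite_false, not_false_eq_true]
      have key : (j:ℝ)/((D:ℝ)*d) + ((d:ℝ)-j)/((D:ℝ)*d) = 1/(D:ℝ) := by
        field_simp; ring
      rw [if_neg (Nat.not_even_iff_odd.mpr ho)] at ih
      push_cast
      linear_combination ih + (a-b)/2*key

lemma max_helper1 (S c e : ℝ) (hc : 0 ≤ c) : max (S + 0) (S + c * e) = S + c * max e 0 := by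
  rcases le_total e 0 with h | h
  · rw [max_eq_right h, max_eq_left (by nlinarith [mul_nonneg hc (neg_nonneg.mpr h)])]
    ring
  · rw [max_eq_left h, max_eq_right (by nlinarith [mul_nonneg hc h])]

lemma max_helper2 (S c e : ℝ) (hc : 0 ≤ c) : max (S + c * e) (S + 0) = S + c * max e 0 := by
  rw [max_comm]; exact max_helper1 S c e hc



/-- For `D ≥ 1`, `d ≥ 2`, `1 ≤ j ≤ d − 1` and reals `a ≥ b ≥ 0` with
`Δ = a − b`, setting
`φ(x) = ∑_{k=1}^{D−1} (a·𝟙[k odd] + b·𝟙[k even]) (x − k/D)₊` and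
`ψ(x) = ∑_{k=1}^{D−1} (b·𝟙[k odd] + a·𝟙[k even]) (x − k/D)₊`,
one has for every `x ∈ [0,1]`:
`max(φ(x), ψ(x) + (Δ/2)x − Δj/(2Dd))
  = ∑_{k=1}^{D−1} b (x − k/D)₊
    + ∑_{k=0}^{D−1} (Δ/2) (𝟙[k even](x − k/D − j/(Dd))₊ + 𝟙[k odd](x − k/D − (d−j)/(Dd))₊)`. -/
theorem hycnn_layer_max_identity (D d : ℕ) (hD : 0 < D) (hd : 2 ≤ d)
    (j : ℕ) (hj1 : 1 ≤ j) (hjd : j ≤ d - 1)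
    (a b : ℝ) (hba : b ≤ a) (hb : 0 ≤ b)
    (x : ℝ) (hx : x ∈ Set.Icc (0 : ℝ) 1) :
    max (∑ k ∈ Finset.Ico 1 D, (if Odd k then a else b) * max (x - (k : ℝ) / D) 0)
        ((∑ k ∈ Finset.Ico 1 D, (if Odd k then b else a) * max (x - (k : ℝ) / D) 0)
          + (a - b) / 2 * x - (a - b) * (j : ℝ) / (2 * (D : ℝ) * (d : ℝ)))
      = (∑ k ∈ Finset.Ico 1 D, b * max (x - (k : ℝ) / D) 0)
        + ∑ k ∈ Finset.range D, (a - b) / 2 *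
            ((if Even k then max (x - (k : ℝ) / D - (j : ℝ) / ((D : ℝ) * d) ) 0 else 0)
              + (if Odd k then
                  max (x - (k : ℝ) / D - ((d : ℝ) - j) / ((D : ℝ) * d)) 0 else 0)) := by
  obtain ⟨hx0, hx1⟩ := hx
  have hD' : (0:ℝ) < D := by exact_mod_cast hD
  have hd' : (0:ℝ) < d := by exact_mod_cast (by omega : 0 < d)
  have hjd' : (j:ℝ) ≤ d := by exact_mod_cast (by omega : j ≤ d)
  have hj' : (0:ℝ) ≤ j := by positivity
  -- bounds on the two thresholds
  have hc1 : 0 ≤ (j:ℝ)/((D:ℝ)*d) ∧ (j:ℝ)/((D:ℝ)*d) ≤ 1/(D:ℝ) := by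
    constructor
    · positivity
    · rw [div_le_div_iff₀ (by positivity) hD']; nlinarith
  have hc2 : 0 ≤ ((d:ℝ)-j)/((D:ℝ)*d) ∧ ((d:ℝ)-j)/((D:ℝ)*d) ≤ 1/(D:ℝ) := by
    constructor
    · apply div_nonneg (by linarith) (by positivity)
    · rw [div_le_div_iff₀ (by positivity) hD']; nlinarith
  -- locate x
  obtain ⟨m, hmD, hml, hmu⟩ : ∃ m, m < D ∧ (m:ℝ)/D ≤ x ∧ x ≤ ((m:ℝ)+1)/D := by
    by_cases hc : ⌊(D:ℝ)*x⌋₊ < D - 1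
    · refine ⟨⌊(D:ℝ)*x⌋₊, by omega, ?_, ?_⟩
      · rw [div_le_iff₀ hD']
        calc ((⌊(D:ℝ)*x⌋₊:ℝ)) ≤ (D:ℝ)*x := Nat.floor_le (by positivity)
          _ = x * D := by ring
      · rw [le_div_iff₀ hD']
        calc x * D = (D:ℝ) * x := by ring
          _ ≤ ⌊(D:ℝ)*x⌋₊ + 1 := (Nat.lt_floor_add_one _).le
    · refine ⟨D - 1, by omega, ?_, ?_⟩
      · rw [div_le_iff₀ hD']
        have h1 : ((D - 1 : ℕ):ℝ) ≤ (D:ℝ)*x := by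
          apply (Nat.le_floor_iff (by positivity)).mp (by omega)
        linarith [h1]
      · rw [le_div_iff₀ hD']
        have : ((D-1:ℕ):ℝ) = (D:ℝ) - 1 := by
          push_cast [Nat.cast_sub hD]; ring
        rw [this]
        nlinarith
  have hkup : ∀ k : ℕ, m < k → x - (k:ℝ)/D ≤ 0 := by
    intro k hk
    have h1 : ((m:ℝ)+1)/D ≤ (k:ℝ)/D := by
      have h2 : ((m:ℝ)+1) ≤ k := by exact_mod_cast hk
      gcongr
    linarith
  have hklo : ∀ k : ℕ, k ≤ m → 0 ≤ x - (k:ℝ)/D := by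
    intro k hk
    have h1 : (k:ℝ)/D ≤ (m:ℝ)/D := by
      have h2 : (k:ℝ) ≤ m := by exact_mod_cast hk
      gcongr
    linarith
  -- reduce Ico sums
  have hsum : ∀ w : ℕ → ℝ, ∑ k ∈ Finset.Ico 1 D, w k * max (x - (k:ℝ)/D) 0
      = ∑ k ∈ Ico 1 (m+1), w k * (x - (k:ℝ)/D) := by
    intro w
    rw [← Finset.sum_Ico_consecutive _ (by omega : 1 ≤ m+1) (by omega : m+1 ≤ D)]
    have h0 : ∑ k ∈ Ico (m+1) D, w k * max (x - (k:ℝ)/D) 0 = 0 := by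
      apply Finset.sum_eq_zero
      intro k hk
      have hk' := Finset.mem_Ico.mp hk
      rw [max_eq_right (hkup k (by omega))]
      ring
    rw [h0, add_zero]
    apply Finset.sum_congr rfl
    intro k hk
    have hk' := Finset.mem_Ico.mp hk
    rw [max_eq_left (hklo k (by omega))]
  -- reduce the range sum
  have hrange : ∑ k ∈ Finset.range D, (a - b) / 2 *
        ((if Even k then max (x - (k : ℝ) / D - (j : ℝ) / ((D : ℝ) * d) ) 0 else 0)
          + (if Odd k then max (x - (k : ℝ) / D - ((d : ℝ) - j) / ((D : ℝ) * d)) 0 else 0))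
      = (∑ k ∈ range m, (a-b)/2 *
            (x - (k:ℝ)/D - (if Even k then (j:ℝ)/((D:ℝ)*d) else ((d:ℝ)-j)/((D:ℝ)*d))))
        + (a-b)/2 * max (x - (m:ℝ)/D
            - (if Even m then (j:ℝ)/((D:ℝ)*d) else ((d:ℝ)-j)/((D:ℝ)*d))) 0 := by
    rw [← Finset.sum_range_add_sum_Ico _ (by omega : m+1 ≤ D)]
    have h0 : ∑ k ∈ Ico (m+1) D, (a - b) / 2 *
        ((if Even k then max (x - (k : ℝ) / D - (j : ℝ) / ((D : ℝ) * d) ) 0 else 0)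
          + (if Odd k then max (x - (k : ℝ) / D - ((d : ℝ) - j) / ((D : ℝ) * d)) 0 else 0))
        = 0 := by
      apply Finset.sum_eq_zero
      intro k hk
      have hk' := Finset.mem_Ico.mp hk
      have hup := hkup k (by omega)
      have e1 : max (x - (k : ℝ) / D - (j : ℝ) / ((D : ℝ) * d)) 0 = 0 :=
        max_eq_right (by linarith [hc1.1])
      have e2 : max (x - (k : ℝ) / D - ((d : ℝ) - j) / ((D : ℝ) * d)) 0 = 0 :=
        max_eq_right (by linarith [hc2.1])
      rw [e1, e2]
      simp
    rw [h0, add_zero, Finset.sum_range_succ]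
    congr 1
    · apply Finset.sum_congr rfl
      intro k hk
      have hkm : k < m := Finset.mem_range.mp hk
      have hkm' : ((k:ℝ)+1)/D ≤ (m:ℝ)/D := by
        have h2 : ((k:ℝ)+1) ≤ m := by exact_mod_cast hkm
        gcongr
      have hsplit2 : ((k:ℝ)+1)/D = (k:ℝ)/D + 1/D := by ring
      rw [hsplit2] at hkm'
      have hup1 : 0 ≤ x - (k:ℝ)/D - (j:ℝ)/((D:ℝ)*d) := by linarith [hc1.2]
      have hup2 : 0 ≤ x - (k:ℝ)/D - ((d:ℝ)-j)/((D:ℝ)*d) := by linarith [hc2.2]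
      rcases Nat.even_or_odd k with h | h
      · rw [if_pos h, if_pos h, if_neg (Nat.not_odd_iff_even.mpr h), max_eq_left hup1]
        ring
      · rw [if_neg (Nat.not_even_iff_odd.mpr h), if_neg (Nat.not_even_iff_odd.mpr h),
          if_pos h, max_eq_left hup2]
        ring
    · rcases Nat.even_or_odd m with h | h
      · rw [if_pos h, if_pos h, if_neg (Nat.not_odd_iff_even.mpr h), add_zero]
      · rw [if_neg (Nat.not_even_iff_odd.mpr h), if_neg (Nat.not_even_iff_odd.mpr h),
          if_pos h, zero_add]
  rw [hsum, hsum, hsum, hrange,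
    keyE1 D d j hD'.ne' hd'.ne' a b x m, keyE2 D d j hD'.ne' hd'.ne' a b x m]
  have hΔ : 0 ≤ (a-b)/2 := by linarith
  rcases Nat.even_or_odd m with he | ho
  · rw [if_pos he, if_pos he, if_pos he, max_helper1 _ _ _ hΔ]
    ring
  · rw [if_neg (Nat.not_even_iff_odd.mpr ho), if_neg (Nat.not_even_iff_odd.mpr ho),
      if_neg (Nat.not_even_iff_odd.mpr ho), max_helper2 _ _ _ hΔ]
    ring
end

section
/- Let ψ : ℝ → ℝ, ψ(u) = |2u − 1|, and for L ∈ ℕ with L ≥ 1 define F_L(x) = ∑_{k=1}^{L} 4^{−k} (1 − ψ^∘k(x)). Then (a) F_L(ℓ·2^{−L}) = (ℓ·2^{−L})·(1 − ℓ·2^{−L}) for every integer ℓ with 0 ≤ ℓ ≤ 2^L, and (b) for every integer ℓ with 0 ≤ ℓ ≤ 2^L − 1 there exist reals c, e such that F_L(x) = c·x + e for all x ∈ [ℓ·2^{−L}, (ℓ+1)·2^{−L}]. -/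
private def psi : ℝ → ℝ := fun v : ℝ => |2 * v - 1|

private lemma key_identity (L : ℕ) (x : ℝ) :
    ∑ k ∈ Finset.Icc 1 L, (4 : ℝ) ^ (-(k : ℤ)) * (1 - psi^[k] x)
      = x * (1 - x) - (4 : ℝ) ^ (-(L : ℤ)) * (psi^[L] x * (1 - psi^[L] x)) := by
  induction L with
  | zero => simp
  | succ L ih =>
    rw [Finset.sum_Icc_succ_top (by omega : 1 ≤ L + 1), ih,
      Function.iterate_succ_apply']
    set u := psi^[L] x with hu
    have habs : psi u ^ 2 = (2 * u - 1) ^ 2 := by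
      simp [psi, sq_abs]
    have e1 : (4 : ℝ) ^ (-((L + 1 : ℕ) : ℤ)) = (4 : ℝ) ^ (-(L : ℤ)) / 4 := by
      have h : (-((L + 1 : ℕ) : ℤ)) = -(L : ℤ) + (-1) := by push_cast; ring
      rw [h, zpow_add₀ (by norm_num : (4:ℝ) ≠ 0)]
      norm_num
      ring
    rw [e1]
    linear_combination (-(4:ℝ) ^ (-(L : ℤ)) / 4) * habs

private lemma endpoint_lemma (L : ℕ) : ∀ ℓ : ℕ, ℓ ≤ 2 ^ L →
    psi^[L] ((ℓ : ℝ) / 2 ^ L) = 0 ∨ psi^[L] ((ℓ : ℝ) / 2 ^ L) = 1 := by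
  induction L with
  | zero =>
    intro ℓ hℓ
    interval_cases ℓ <;> simp
  | succ L ih =>
    intro ℓ hℓ
    rw [Function.iterate_succ_apply]
    have h2 : (0:ℝ) < 2 ^ L := by positivity
    have harg : 2 * ((ℓ : ℝ) / 2 ^ (L + 1)) - 1 = ((ℓ : ℝ) - 2 ^ L) / 2 ^ L := by
      field_simp
      ring
    rcases le_or_gt ℓ (2 ^ L) with h | h
    · have hℓr : (ℓ : ℝ) ≤ 2 ^ L := by exact_mod_cast h
      have hcast : ((2 ^ L - ℓ : ℕ) : ℝ) = 2 ^ L - ℓ := by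
        rw [Nat.cast_sub h]; push_cast; ring
      have step : psi ((ℓ : ℝ) / 2 ^ (L + 1)) = ((2 ^ L - ℓ : ℕ) : ℝ) / 2 ^ L := by
        simp only [psi]
        rw [harg, abs_of_nonpos (div_nonpos_of_nonpos_of_nonneg (by linarith) h2.le),
          hcast]
        ring
      rw [step]
      exact ih _ (by omega)
    · have hℓr : (2:ℝ) ^ L ≤ ℓ := by exact_mod_cast h.le
      have hcast : ((ℓ - 2 ^ L : ℕ) : ℝ) = ℓ - 2 ^ L := by
        rw [Nat.cast_sub h.le]; push_cast; ring
      have step : psi ((ℓ : ℝ) / 2 ^ (L + 1)) = ((ℓ - 2 ^ L : ℕ) : ℝ) / 2 ^ L := by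
        simp only [psi]
        rw [harg, abs_of_nonneg (div_nonneg (by linarith) h2.le), hcast]
      rw [step]
      exact ih _ (by omega)

private lemma affine_lemma (L : ℕ) : ∀ ℓ : ℕ, ℓ < 2 ^ L →
    ∃ a b : ℝ, a ^ 2 = 4 ^ L ∧
      ∀ x ∈ Set.Icc ((ℓ : ℝ) / 2 ^ L) (((ℓ : ℝ) + 1) / 2 ^ L),
        psi^[L] x = a * x + b := by
  induction L with
  | zero =>
    intro ℓ hℓ
    exact ⟨1, 0, by norm_num, fun x _ => by simp⟩
  | succ L ih =>
    intro ℓ hℓ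
    have h2 : (0:ℝ) < 2 ^ L := by positivity
    have hp : (0:ℝ) < 2 ^ (L + 1) := by positivity
    have hps : (2:ℝ) ^ (L + 1) = 2 * 2 ^ L := by rw [pow_succ]; ring
    rcases lt_or_ge ℓ (2 ^ L) with h | h
    · have hle : ℓ + 1 ≤ 2 ^ L := h
      have hℓr : (ℓ : ℝ) + 1 ≤ 2 ^ L := by exact_mod_cast hle
      obtain ⟨a, b, ha, hab⟩ := ih (2 ^ L - 1 - ℓ) (by omega)
      have hcast : ((2 ^ L - 1 - ℓ : ℕ) : ℝ) = 2 ^ L - 1 - ℓ := by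
        have e : (2 ^ L - 1 - ℓ : ℕ) = 2 ^ L - (ℓ + 1) := by omega
        rw [e, Nat.cast_sub hle]; push_cast; ring
      refine ⟨-2 * a, a + b, by rw [pow_succ]; linear_combination 4 * ha, fun x hx => ?_⟩
      obtain ⟨hx1, hx2⟩ := hx
      have hx1' : (ℓ : ℝ) ≤ x * 2 ^ (L + 1) := by rwa [div_le_iff₀ hp] at hx1
      have hx2' : x * 2 ^ (L + 1) ≤ (ℓ : ℝ) + 1 := by rwa [le_div_iff₀ hp] at hx2
      have hxhalf : x ≤ 1 / 2 := by nlinarith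
      have hpsix : psi x = 1 - 2 * x := by
        simp only [psi]; rw [abs_of_nonpos (by linarith)]; ring
      rw [Function.iterate_succ_apply, hpsix, hab (1 - 2 * x) ⟨?_, ?_⟩]
      · ring
      · rw [hcast, div_le_iff₀ h2]
        nlinarith
      · rw [hcast, le_div_iff₀ h2]
        nlinarith
    · have hℓr : (2:ℝ) ^ L ≤ ℓ := by exact_mod_cast h
      obtain ⟨a, b, ha, hab⟩ := ih (ℓ - 2 ^ L) (by omega)
      have hcast : ((ℓ - 2 ^ L : ℕ) : ℝ) = ℓ - 2 ^ L := by
        rw [Nat.cast_sub h]; push_cast; ring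
      refine ⟨2 * a, b - a, by rw [pow_succ]; linear_combination 4 * ha, fun x hx => ?_⟩
      obtain ⟨hx1, hx2⟩ := hx
      have hx1' : (ℓ : ℝ) ≤ x * 2 ^ (L + 1) := by rwa [div_le_iff₀ hp] at hx1
      have hx2' : x * 2 ^ (L + 1) ≤ (ℓ : ℝ) + 1 := by rwa [le_div_iff₀ hp] at hx2
      have hxhalf : 1 / 2 ≤ x := by nlinarith
      have hpsix : psi x = 2 * x - 1 := by
        simp only [psi]; rw [abs_of_nonneg (by linarith)]
      rw [Function.iterate_succ_apply, hpsix, hab (2 * x - 1) ⟨?_, ?_⟩]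
      · ring
      · rw [hcast, div_le_iff₀ h2]
        nlinarith
      · rw [hcast, le_div_iff₀ h2]
        nlinarith

/-- With `ψ(u) = |2u − 1|` and `F_L(x) = ∑_{k=1}^L 4^{−k} (1 − ψ^∘k(x))`:
(a) `F_L(ℓ·2^{−L}) = (ℓ·2^{−L})(1 − ℓ·2^{−L})` for every integer `0 ≤ ℓ ≤ 2^L`, and
(b) on every dyadic interval `[ℓ·2^{−L}, (ℓ+1)·2^{−L}]` with `0 ≤ ℓ ≤ 2^L − 1` the
function `F_L` is affine. -/
theorem iterate_sawtooth_interpolation (L : ℕ) (hL : 1 ≤ L) :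
    (∀ ℓ : ℕ, ℓ ≤ 2 ^ L →
      ∑ k ∈ Finset.Icc 1 L,
          (4 : ℝ) ^ (-(k : ℤ)) * (1 - (fun v : ℝ => |2 * v - 1|)^[k] ((ℓ : ℝ) / 2 ^ L))
        = ((ℓ : ℝ) / 2 ^ L) * (1 - (ℓ : ℝ) / 2 ^ L)) ∧
    (∀ ℓ : ℕ, ℓ < 2 ^ L → ∃ c e : ℝ,
      ∀ x ∈ Set.Icc ((ℓ : ℝ) / 2 ^ L) (((ℓ : ℝ) + 1) / 2 ^ L),
        ∑ k ∈ Finset.Icc 1 L,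
            (4 : ℝ) ^ (-(k : ℤ)) * (1 - (fun v : ℝ => |2 * v - 1|)^[k] x)
          = c * x + e) := by
  have hpsi : (fun v : ℝ => |2 * v - 1|) = psi := rfl
  constructor
  · intro ℓ hℓ
    rw [hpsi, key_identity]
    rcases endpoint_lemma L ℓ hℓ with h | h <;> rw [h] <;> ring
  · intro ℓ hℓ
    obtain ⟨a, b, ha, hab⟩ := affine_lemma L ℓ hℓ
    refine ⟨1 - (4:ℝ) ^ (-(L:ℤ)) * (a - 2 * a * b), -((4:ℝ) ^ (-(L:ℤ)) * (b - b ^ 2)),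
      fun x hx => ?_⟩
    rw [hpsi, key_identity, hab x hx]
    have h4 : (4:ℝ) ^ (-(L:ℤ)) * (4:ℝ) ^ (L:ℕ) = 1 := by
      rw [← zpow_natCast (4:ℝ) L, ← zpow_add₀ (by norm_num : (4:ℝ) ≠ 0)]
      norm_num
    linear_combination ((4:ℝ) ^ (-(L:ℤ)) * x ^ 2) * ha + x ^ 2 * h4
end

section
/- Let ψ : ℝ → ℝ, ψ(u) = |2u − 1|. Then for every L ∈ ℕ with L ≥ 1, sup_{x ∈ [0,1]} | x + ∑_{k=1}^{L} 4^{−k}·(ψ^∘k(x) − 1) − 2^{−2L−3} − x² | = 2^{−2L−3}. -/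
noncomputable def tmap : ℝ → ℝ := fun v => 1 - |2 * v - 1|

lemma tmap_psi (x : ℝ) : tmap (|2 * x - 1|) = tmap (tmap x) := by
  simp only [tmap]
  rw [show 2 * (1 - |2 * x - 1|) - 1 = -(2 * |2 * x - 1| - 1) by ring, abs_neg]

lemma psi_iter (k : ℕ) (hk : 1 ≤ k) (x : ℝ) :
    (fun v : ℝ => |2 * v - 1|)^[k] x = 1 - tmap^[k] x := by
  induction k generalizing x with
  | zero => omega
  | succ n ih =>
    rcases Nat.eq_or_lt_of_le hk with h | h
    · simp [← h, tmap]
    · have hn : 1 ≤ n := by omega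
      rw [Function.iterate_succ_apply, Function.iterate_succ_apply]
      show (fun v : ℝ => |2 * v - 1|)^[n] (|2 * x - 1|) = 1 - tmap^[n] (tmap x)
      rw [ih hn]
      congr 1
      obtain ⟨m, rfl⟩ : ∃ m, n = m + 1 := ⟨n - 1, by omega⟩
      rw [Function.iterate_succ_apply, Function.iterate_succ_apply, tmap_psi]

noncomputable def eL : ℕ → ℝ → ℝ :=
  fun L x => x - (∑ k ∈ Finset.range L, (4 : ℝ) ^ (-((k : ℤ) + 1)) * tmap^[k + 1] x) - x ^ 2

lemma eL_rec (L : ℕ) (x : ℝ) : eL (L + 1) x = eL L (tmap x) / 4 := by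
  have hid : x - tmap x / 2 + (tmap x) ^ 2 / 4 = x ^ 2 := by
    have := sq_abs (2 * x - 1)
    simp only [tmap]; nlinarith [this]
  simp only [eL, Finset.sum_range_succ', Function.iterate_succ_apply]
  have h1 : ∑ j ∈ Finset.range L, (4:ℝ)^(-((↑(j+1):ℤ)+1)) * tmap^[j] (tmap (tmap x))
      = (∑ j ∈ Finset.range L, (4:ℝ)^(-((j:ℤ)+1)) * tmap^[j] (tmap (tmap x))) / 4 := by
    rw [Finset.sum_div]
    refine Finset.sum_congr rfl fun j _ => ?_
    push_cast
    rw [show -((j:ℤ)+1+1) = -((j:ℤ)+1) + (-1) by ring,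
      zpow_add₀ (by norm_num : (4:ℝ) ≠ 0)]
    norm_num; ring
  rw [h1]
  norm_num
  linarith [hid]

lemma tmap_mem (x : ℝ) (hx : x ∈ Set.Icc (0:ℝ) 1) : tmap x ∈ Set.Icc (0:ℝ) 1 := by
  obtain ⟨h0, h1⟩ := hx
  simp only [tmap, Set.mem_Icc]
  constructor
  · have : |2 * x - 1| ≤ 1 := abs_le.2 ⟨by linarith, by linarith⟩
    linarith
  · have := abs_nonneg (2 * x - 1); linarith

lemma eL_bounds (L : ℕ) : ∀ x ∈ Set.Icc (0:ℝ) 1,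
    0 ≤ eL L x ∧ eL L x ≤ (2:ℝ) ^ (-(2 * (L:ℤ) + 2)) := by
  induction L with
  | zero =>
    intro x ⟨h0, h1⟩
    simp only [eL, Finset.range_zero, Finset.sum_empty]
    constructor
    · nlinarith
    · norm_num; nlinarith [sq_nonneg (2*x-1)]
  | succ n ih =>
    intro x hx
    rw [eL_rec]
    obtain ⟨hlo, hhi⟩ := ih (tmap x) (tmap_mem x hx)
    constructor
    · linarith
    · have : (2:ℝ) ^ (-(2 * ((n:ℤ)+1) + 2)) = (2:ℝ) ^ (-(2 * (n:ℤ) + 2)) / 4 := by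
        rw [show -(2 * ((n:ℤ)+1) + 2) = -(2 * (n:ℤ) + 2) + (-2) by ring,
          zpow_add₀ (by norm_num : (2:ℝ) ≠ 0)]
        norm_num; ring
      push_cast
      rw [this]
      linarith

lemma eL_attain (L : ℕ) : eL L ((2:ℝ) ^ (-((L:ℤ)+1))) = (2:ℝ) ^ (-(2 * (L:ℤ) + 2)) := by
  induction L with
  | zero =>
    simp only [eL, Finset.range_zero, Finset.sum_empty]
    norm_num
  | succ n ih =>
    rw [eL_rec]
    have ht : tmap ((2:ℝ) ^ (-((n:ℤ)+1+1))) = (2:ℝ) ^ (-((n:ℤ)+1)) := by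
      simp only [tmap]
      have h1 : (2:ℝ) * (2:ℝ) ^ (-((n:ℤ)+1+1)) = (2:ℝ) ^ (-((n:ℤ)+1)) := by
        rw [show -((n:ℤ)+1+1) = -((n:ℤ)+1) + (-1) by ring,
          zpow_add₀ (by norm_num : (2:ℝ) ≠ 0)]
        ring
      have h2 : (2:ℝ) ^ (-((n:ℤ)+1)) ≤ 1 := by
        apply zpow_le_one_of_nonpos₀ (by norm_num)
        omega
      rw [h1, abs_of_nonpos (by linarith)]
      ring
    push_cast
    rw [ht, ih]
    rw [show -(2 * ((n:ℤ)+1) + 2) = -(2 * (n:ℤ) + 2) + (-2) by ring,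
      zpow_add₀ (by norm_num : (2:ℝ) ≠ 0)]
    norm_num; ring

lemma sum_convert (L : ℕ) (x : ℝ) :
    (∑ k ∈ Finset.Icc 1 L,
        (4 : ℝ) ^ (-(k : ℤ)) * ((fun v : ℝ => |2 * v - 1|)^[k] x - 1))
      = -(∑ k ∈ Finset.range L, (4 : ℝ) ^ (-((k : ℤ) + 1)) * tmap^[k + 1] x) := by
  rw [← Finset.Ico_add_one_right_eq_Icc, Finset.sum_Ico_eq_sum_range]
  rw [← Finset.sum_neg_distrib]
  apply Finset.sum_congr (by norm_num)
  intro j hj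
  rw [psi_iter (1 + j) (by omega)]
  push_cast
  rw [show -(1 + (j:ℤ)) = -((j:ℤ) + 1) by ring, show 1 + j = j + 1 from by omega]
  ring

/-- With `ψ(u) = |2u − 1|`, for every `L ≥ 1`,
`sup_{x ∈ [0,1]} | x + ∑_{k=1}^L 4^{−k}(ψ^∘k(x) − 1) − 2^{−2L−3} − x² | = 2^{−2L−3}`. -/
theorem iterate_sawtooth_sq_approx (L : ℕ) (hL : 1 ≤ L) :
    (⨆ x : Set.Icc (0 : ℝ) 1,
        |(x : ℝ) + (∑ k ∈ Finset.Icc 1 L,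
              (4 : ℝ) ^ (-(k : ℤ)) * ((fun v : ℝ => |2 * v - 1|)^[k] (x : ℝ) - 1))
          - (2 : ℝ) ^ (-(2 * (L : ℤ) + 3)) - (x : ℝ) ^ 2|)
      = (2 : ℝ) ^ (-(2 * (L : ℤ) + 3)) := by
  set c : ℝ := (2 : ℝ) ^ (-(2 * (L : ℤ) + 3)) with hc
  have h2c : (2:ℝ) ^ (-(2 * (L:ℤ) + 2)) = 2 * c := by
    rw [hc, show -(2 * (L:ℤ) + 2) = -(2 * (L:ℤ) + 3) + 1 by ring,
      zpow_add₀ (by norm_num : (2:ℝ) ≠ 0)]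
    ring
  have hcpos : 0 < c := by positivity
  have hval : ∀ x : ℝ, ((x : ℝ) + (∑ k ∈ Finset.Icc 1 L,
        (4 : ℝ) ^ (-(k : ℤ)) * ((fun v : ℝ => |2 * v - 1|)^[k] (x : ℝ) - 1))
          - c - (x : ℝ) ^ 2) = eL L x - c := by
    intro x
    rw [sum_convert L x]
    simp only [eL]
    ring
  have hbd : ∀ x : Set.Icc (0:ℝ) 1,
      |(x : ℝ) + (∑ k ∈ Finset.Icc 1 L,
          (4 : ℝ) ^ (-(k : ℤ)) * ((fun v : ℝ => |2 * v - 1|)^[k] (x : ℝ) - 1))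
        - c - (x : ℝ) ^ 2| ≤ c := by
    intro ⟨x, hx⟩
    rw [hval, abs_le]
    obtain ⟨hlo, hhi⟩ := eL_bounds L x hx
    rw [h2c] at hhi
    constructor <;> simp <;> linarith
  haveI : Nonempty (Set.Icc (0:ℝ) 1) := ⟨⟨0, by norm_num⟩⟩
  apply le_antisymm (ciSup_le hbd)
  have hx0 : (2:ℝ) ^ (-((L:ℤ)+1)) ∈ Set.Icc (0:ℝ) 1 := by
    constructor
    · positivity
    · apply zpow_le_one_of_nonpos₀ (by norm_num)
      omega
  have := le_ciSup (f := fun x : Set.Icc (0:ℝ) 1 =>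
      |(x : ℝ) + (∑ k ∈ Finset.Icc 1 L,
          (4 : ℝ) ^ (-(k : ℤ)) * ((fun v : ℝ => |2 * v - 1|)^[k] (x : ℝ) - 1))
        - c - (x : ℝ) ^ 2|) ⟨c, Set.forall_mem_range.2 hbd⟩ (⟨_, hx0⟩ : Set.Icc (0:ℝ) 1)
  refine le_trans (le_of_eq ?_) this
  rw [hval, eL_attain L, h2c]
  rw [abs_of_nonneg (by linarith)]
  ring
end

section
/- For every positive integer M, the function f(x) = x/M + (2/M)·∑_{k=1}^{M−1} (x − k/M)_+ satisfies sup_{x ∈ [0,1]} |f(x) − x²| ≤ 1/(4M²) and 0 ≤ f(x) ≤ x for every x ∈ [0,1]. -/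
lemma gauss_icc (n : ℕ) : (∑ k ∈ Finset.Icc 1 n, (k : ℝ)) = n * (n + 1) / 2 := by
  induction n with
  | zero => simp
  | succ n ih =>
    rw [Finset.sum_Icc_succ_top (by omega), ih]
    push_cast
    ring

/-- For every positive integer `M`, the function
`f(x) = x/M + (2/M) ∑_{k=1}^{M−1} (x − k/M)₊` satisfies
`sup_{x ∈ [0,1]} |f(x) − x²| ≤ 1/(4M²)` and `0 ≤ f(x) ≤ x` for every `x ∈ [0,1]`. -/
theorem nonneg_piecewise_sq_approx (M : ℕ) (hM : 0 < M)
    (f : ℝ → ℝ)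
    (hf : ∀ x : ℝ, f x = x / M + (2 / M) * ∑ k ∈ Finset.Icc 1 (M - 1), max (x - (k : ℝ) / M) 0) :
    (∀ x ∈ Set.Icc (0 : ℝ) 1, |f x - x ^ 2| ≤ 1 / (4 * (M : ℝ) ^ 2)) ∧
    (∀ x ∈ Set.Icc (0 : ℝ) 1, 0 ≤ f x ∧ f x ≤ x) := by
  set m : ℝ := (M : ℝ) with hm
  have hm0 : (0:ℝ) < m := by rw [hm]; exact_mod_cast hM
  have hm1 : (1:ℝ) ≤ m := by rw [hm]; exact_mod_cast hM
  have key : ∀ x : ℝ, 0 ≤ x → x ≤ 1 → ∃ j : ℕ,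
      (j : ℝ) ≤ m * x ∧ m * x ≤ (j : ℝ) + 1 ∧ (j : ℝ) + 1 ≤ m ∧
      m ^ 2 * f x = x * (2 * (j:ℝ) + 1) * m - (j:ℝ) * ((j:ℝ) + 1) := by
    intro x hx0 hx1
    have hmx0 : 0 ≤ m * x := mul_nonneg hm0.le hx0
    refine ⟨min ⌊m * x⌋.toNat (M - 1), ?_, ?_, ?_, ?_⟩
    · set j := min ⌊m * x⌋.toNat (M - 1)
      have h1 : j ≤ ⌊m * x⌋.toNat := min_le_left _ _
      have h2 : ((⌊m * x⌋.toNat : ℤ) : ℝ) ≤ m * x := by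
        rw [Int.toNat_of_nonneg (Int.floor_nonneg.2 hmx0)]
        exact Int.floor_le _
      calc (j:ℝ) ≤ (⌊m * x⌋.toNat : ℝ) := by exact_mod_cast h1
        _ ≤ m * x := by exact_mod_cast h2
    · by_cases h : ⌊m * x⌋.toNat ≤ M - 1
      · rw [min_eq_left h]
        have := Int.lt_floor_add_one (m * x)
        have h2 : ((⌊m * x⌋.toNat : ℤ) : ℝ) = ((⌊m*x⌋ : ℤ) : ℝ) := by
          rw [Int.toNat_of_nonneg (Int.floor_nonneg.2 hmx0)]
        push_cast at h2 ⊢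
        linarith
      · rw [min_eq_right (le_of_not_ge h)]
        have : ((M - 1 : ℕ) : ℝ) + 1 = m := by
          rw [hm]; push_cast [Nat.cast_sub hM]; ring
        rw [this]
        nlinarith
    · have hn : min ⌊m * x⌋.toNat (M - 1) + 1 ≤ M := by omega
      rw [hm]
      exact_mod_cast hn
    · set j := min ⌊m * x⌋.toNat (M - 1) with hj
      have hjM : j ≤ M - 1 := min_le_right _ _
      have hj1 : (j:ℝ) ≤ m * x := by
        have h1 : j ≤ ⌊m * x⌋.toNat := min_le_left _ _
        have h2 : ((⌊m * x⌋.toNat : ℤ) : ℝ) ≤ m * x := by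
          rw [Int.toNat_of_nonneg (Int.floor_nonneg.2 hmx0)]
          exact Int.floor_le _
        calc (j:ℝ) ≤ (⌊m * x⌋.toNat : ℝ) := by exact_mod_cast h1
          _ ≤ m * x := by exact_mod_cast h2
      have hj2 : m * x ≤ (j:ℝ) + 1 := by
        by_cases h : ⌊m * x⌋.toNat ≤ M - 1
        · rw [hj, min_eq_left h]
          have := Int.lt_floor_add_one (m * x)
          have h2 : ((⌊m * x⌋.toNat : ℤ) : ℝ) = ((⌊m*x⌋ : ℤ) : ℝ) := by
            rw [Int.toNat_of_nonneg (Int.floor_nonneg.2 hmx0)]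
          push_cast at h2 ⊢
          linarith
        · rw [hj, min_eq_right (le_of_not_ge h)]
          have : ((M - 1 : ℕ) : ℝ) + 1 = m := by
            rw [hm]; push_cast [Nat.cast_sub hM]; ring
          rw [this]
          nlinarith
      have hsum : (∑ k ∈ Finset.Icc 1 (M - 1), max (x - (k : ℝ) / m) 0)
          = (j:ℝ) * x - ((j:ℝ) * ((j:ℝ) + 1) / 2) / m := by
        have hsub : Finset.Icc 1 j ⊆ Finset.Icc 1 (M - 1) :=
          Finset.Icc_subset_Icc_right hjM
        have h1 : ∑ k ∈ Finset.Icc 1 (M - 1), max (x - (k : ℝ) / m) 0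
            = ∑ k ∈ Finset.Icc 1 j, max (x - (k : ℝ) / m) 0 := by
          refine (Finset.sum_subset hsub fun k hk hk' => ?_).symm
          have hk1 : 1 ≤ k := (Finset.mem_Icc.1 hk).1
          have hkj : j + 1 ≤ k := by
            simp only [Finset.mem_Icc, not_and, not_le] at hk'
            omega
          have hxk : x ≤ (k:ℝ) / m := by
            rw [le_div_iff₀ hm0]
            have : ((j:ℝ) + 1) ≤ (k:ℝ) := by exact_mod_cast hkj
            nlinarith
          simpa [max_eq_right] using sub_nonpos.2 hxk
        have h2 : ∑ k ∈ Finset.Icc 1 j, max (x - (k : ℝ) / m) 0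
            = ∑ k ∈ Finset.Icc 1 j, (x - (k : ℝ) / m) := by
          refine Finset.sum_congr rfl fun k hk => ?_
          have hkj : k ≤ j := (Finset.mem_Icc.1 hk).2
          have : (k:ℝ) / m ≤ x := by
            rw [div_le_iff₀ hm0]
            have : (k:ℝ) ≤ (j:ℝ) := by exact_mod_cast hkj
            nlinarith
          exact max_eq_left (by linarith)
        rw [h1, h2, Finset.sum_sub_distrib, Finset.sum_const, ← Finset.sum_div,
          gauss_icc j, Nat.card_Icc]
        simp only [Nat.add_sub_cancel]
        ring
      rw [hf x, hsum, hm]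
      field_simp
      ring
  have hmain : ∀ x : ℝ, 0 ≤ x → x ≤ 1 →
      |f x - x ^ 2| ≤ 1 / (4 * m ^ 2) ∧ 0 ≤ f x ∧ f x ≤ x := by
    intro x hx0 hx1
    obtain ⟨j, hj1, hj2, hj3, hfx⟩ := key x hx0 hx1
    have h4 : (0:ℝ) < 4 * m ^ 2 := by positivity
    have hsn := sq_nonneg (2 * m * x - 2 * (j:ℝ) - 1)
    have hs1 : (2 * m * x - 2 * (j:ℝ) - 1) ^ 2 ≤ 1 := by nlinarith
    refine ⟨?_, ?_, ?_⟩
    · rw [le_div_iff₀ h4, ← abs_of_pos h4, ← abs_mul, abs_le]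
      constructor <;> nlinarith [sq_nonneg m, mul_pos hm0 hm0]
    · nlinarith [sq_nonneg x, mul_pos hm0 hm0]
    · nlinarith [mul_nonneg (sub_nonneg.2 hj1) (by linarith : (0:ℝ) ≤ m - (j:ℝ) - 1),
        mul_nonneg (sub_nonneg.2 hj2) (by linarith : (0:ℝ) ≤ m - (j:ℝ))]
  exact ⟨fun x hx => (hmain x hx.1 hx.2).1, fun x hx => (hmain x hx.1 hx.2).2⟩
end
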